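/- arXiv:2508.07158 — 13 statements merged into one kernel-verified Lean document; each statement's English description precedes it below -/
import Mathlib

section
/- Let F = (f_1,…,f_N) be a frame for an n-dimensional complex inner product space H and let G = (g_1,…,g_N) be a 1-uniform dual of F, i.e., a dual frame of F such that ⟨f_i, g_i⟩ has the same value for all 1 ≤ i ≤ N. Then ∑_{i ≠ j} |⟨f_i, g_j⟩|² ≥ n − n²/N. -/
open scoped ComplexInnerProductSpace

/-- If `F` is a frame for an `n`-dimensional complex inner product
space `H` and `G` is a `1`-uniform dual of `F` (a dual frame such that the paper's
`⟨f i, g i⟩ = ⟪g i, f i⟫` takes the same value for all `i`), then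
`∑_{i ≠ j} |⟨f i, g j⟩|² ≥ n − n²/N`. -/
theorem stmt_1 {H : Type*} [NormedAddCommGroup H] [InnerProductSpace ℂ H]
    [FiniteDimensional ℂ H] (n N : ℕ) (hn : Module.finrank ℂ H = n)
    (f g : Fin N → H)
    (hdual : ∀ x : H, x = ∑ i, ⟪f i, x⟫ • g i)
    (huniform : ∃ c : ℂ, ∀ i, ⟪g i, f i⟫ = c) :
    (n : ℝ) - (n : ℝ) ^ 2 / N ≤ ∑ i, ∑ j ∈ Finset.univ.erase i, ‖⟪g j, f i⟫‖ ^ 2 := by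
  classical
  rcases Nat.eq_zero_or_pos N with hN | hN
  · subst hN
    have hH : ∀ x : H, x = 0 := fun x => by simpa using hdual x
    have hsub : Subsingleton H := ⟨fun a b => (hH a).trans (hH b).symm⟩
    have hn0 : n = 0 := by
      rw [← hn]
      exact Module.finrank_zero_of_subsingleton
    subst hn0
    simp
  have hNc : (N : ℂ) ≠ 0 := Nat.cast_ne_zero.mpr hN.ne'
  have hNr : (N : ℝ) ≠ 0 := Nat.cast_ne_zero.mpr hN.ne'
  set a : Fin N → Fin N → ℂ := fun i j => ⟪f i, g j⟫ with ha
  -- idempotency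
  have hidem : ∀ i k, a i k = ∑ j, a i j * a j k := by
    intro i k
    have h1 : ⟪f i, ∑ j, ⟪f j, g k⟫ • g j⟫ = ∑ j, a i j * a j k := by
      rw [inner_sum]
      exact Finset.sum_congr rfl fun j _ => by rw [inner_smul_right, mul_comm]
    rw [← h1, ← hdual]
  -- trace
  have htr : ∑ i, a i i = (n : ℂ) := by
    set b := stdOrthonormalBasis ℂ H with hb
    have hob := b.orthonormal
    rw [orthonormal_iff_ite] at hob
    have h2 : ∀ k, ∑ i, ⟪f i, (b k : H)⟫ * ⟪(b k : H), g i⟫ = 1 := by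
      intro k
      have h1 : ⟪(b k : H), ∑ i, ⟪f i, (b k : H)⟫ • g i⟫
          = ∑ i, ⟪f i, (b k : H)⟫ * ⟪(b k : H), g i⟫ := by
        rw [inner_sum]
        exact Finset.sum_congr rfl fun i _ => inner_smul_right _ _ _
      rw [← h1, ← hdual]
      simpa using hob k k
    calc ∑ i, a i i = ∑ i, ∑ k, ⟪f i, (b k : H)⟫ * ⟪(b k : H), g i⟫ :=
          Finset.sum_congr rfl fun i _ => (b.sum_inner_mul_inner _ _).symm
      _ = ∑ k, ∑ i, ⟪f i, (b k : H)⟫ * ⟪(b k : H), g i⟫ := Finset.sum_comm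
      _ = ∑ _k : Fin (Module.finrank ℂ H), (1 : ℂ) :=
          Finset.sum_congr rfl fun k _ => h2 k
      _ = (n : ℂ) := by simp [hn]
  -- diagonal constant
  obtain ⟨c, hc⟩ := huniform
  have hdiag : ∀ i, a i i = (starRingEnd ℂ) c := by
    intro i
    rw [ha]
    simp only
    rw [← inner_conj_symm, hc]
  have h3 : (N : ℂ) * (starRingEnd ℂ) c = n := by
    have := htr
    simp only [hdiag] at this
    simpa [Finset.sum_const, Finset.card_univ, nsmul_eq_mul] using this
  have hdiag2 : ∀ i, a i i = (n : ℂ) / N := by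
    intro i
    rw [hdiag i, eq_div_iff hNc, mul_comm, h3]
  -- diagonal norms
  have hdnorm : ∀ i, ‖a i i‖ ^ 2 = ((n : ℝ) / N) ^ 2 := by
    intro i
    rw [hdiag2 i]
    simp [norm_div]
  -- main inequality: n ≤ ∑∑ ‖a i j‖²
  have hre : (n : ℝ) = ∑ i, ∑ j, (a i j * a j i).re := by
    have : ((n : ℂ)).re = (∑ i, ∑ j, a i j * a j i).re := by
      rw [← htr]
      congr 1
      exact Finset.sum_congr rfl fun i _ => hidem i i
    simpa [Complex.re_sum] using this
  have hineq : (n : ℝ) ≤ ∑ i, ∑ j, ‖a i j‖ ^ 2 := by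
    rw [hre]
    have step1 : ∑ i, ∑ j, (a i j * a j i).re
        ≤ ∑ i, ∑ j, (‖a i j‖ ^ 2 + ‖a j i‖ ^ 2) / 2 := by
      refine Finset.sum_le_sum fun i _ => Finset.sum_le_sum fun j _ => ?_
      calc (a i j * a j i).re ≤ ‖a i j * a j i‖ := Complex.re_le_norm _
        _ = ‖a i j‖ * ‖a j i‖ := norm_mul _ _
        _ ≤ (‖a i j‖ ^ 2 + ‖a j i‖ ^ 2) / 2 := by
            nlinarith [sq_nonneg (‖a i j‖ - ‖a j i‖)]
    refine step1.trans (le_of_eq ?_)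
    have hcomm : ∑ i, ∑ j, ‖a j i‖ ^ 2 = ∑ i, ∑ j, ‖a i j‖ ^ 2 := Finset.sum_comm
    have expand : ∑ i, ∑ j, (‖a i j‖ ^ 2 + ‖a j i‖ ^ 2) / 2
        = ((∑ i, ∑ j, ‖a i j‖ ^ 2) + ∑ i, ∑ j, ‖a j i‖ ^ 2) / 2 := by
      have hrow : ∀ i, ∑ j, (‖a i j‖ ^ 2 + ‖a j i‖ ^ 2) / 2
          = ((∑ j, ‖a i j‖ ^ 2) + ∑ j, ‖a j i‖ ^ 2) / 2 := fun i => by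
        rw [← Finset.sum_div, ← Finset.sum_add_distrib]
      simp only [hrow]
      rw [← Finset.sum_div, ← Finset.sum_add_distrib]
    rw [expand, hcomm]
    ring
  -- split off diagonal
  have hsplit : ∑ i, ∑ j, ‖a i j‖ ^ 2
      = (∑ i, ‖a i i‖ ^ 2) + ∑ i, ∑ j ∈ Finset.univ.erase i, ‖a i j‖ ^ 2 := by
    rw [← Finset.sum_add_distrib]
    exact Finset.sum_congr rfl fun i _ =>
      (Finset.add_sum_erase _ _ (Finset.mem_univ i)).symm
  have hdsum : ∑ i, ‖a i i‖ ^ 2 = (n : ℝ) ^ 2 / N := by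
    simp only [hdnorm]
    rw [Finset.sum_const, Finset.card_univ, Fintype.card_fin, nsmul_eq_mul]
    field_simp
  have hgoal : ∑ i, ∑ j ∈ Finset.univ.erase i, ‖⟪g j, f i⟫‖ ^ 2
      = ∑ i, ∑ j ∈ Finset.univ.erase i, ‖a i j‖ ^ 2 := by
    refine Finset.sum_congr rfl fun i _ => Finset.sum_congr rfl fun j _ => ?_
    rw [ha]
    simp only
    rw [norm_inner_symm]
  rw [hgoal]
  rw [hsplit, hdsum] at hineq
  linarith
end

section
/- Let (F, G) be a dual pair of N-element families in an n-dimensional complex inner product space H and let p ≥ 1. Then the 1-erasure spectral average error satisfies AE_R^{(1),p}(F,G) = ((1/N) ∑_{i=1}^N |⟨f_i, g_i⟩|^p)^{1/p} ≥ n/N. -/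
open scoped ComplexInnerProductSpace

/-! The reconstruction formula writes the identity of `H` as the sum of the rank-one maps
`x ↦ ⟪f i, x⟫ • g i`; taking traces gives `∑ i, ⟪f i, g i⟫ = n`, hence `n ≤ ∑ i, ‖⟪g i, f i⟫‖`.
The arithmetic mean of these numbers, at least `n / N`, is dominated by their `p`-power mean. -/

theorem sum_inner_eq_finrank_of_reconstruction {𝕜 E ι : Type*} [RCLike 𝕜]
    [NormedAddCommGroup E] [InnerProductSpace 𝕜 E] [FiniteDimensional 𝕜 E] [Fintype ι]
    {f g : ι → E} (hfg : ∀ x : E, x = ∑ i, inner 𝕜 (f i) x • g i) :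
    ∑ i, inner 𝕜 (f i) (g i) = Module.finrank 𝕜 E := by
  have hid : LinearMap.id = ∑ i, (innerₛₗ 𝕜 (f i)).smulRight (g i) := by
    ext x
    simpa using hfg x
  simpa using (congrArg (LinearMap.trace 𝕜 E) hid).symm

theorem finrank_le_sum_norm_inner_of_reconstruction {𝕜 E ι : Type*} [RCLike 𝕜]
    [NormedAddCommGroup E] [InnerProductSpace 𝕜 E] [FiniteDimensional 𝕜 E] [Fintype ι]
    {f g : ι → E} (hfg : ∀ x : E, x = ∑ i, inner 𝕜 (f i) x • g i) :
    (Module.finrank 𝕜 E : ℝ) ≤ ∑ i, ‖inner 𝕜 (g i) (f i)‖ :=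
  calc (Module.finrank 𝕜 E : ℝ) = ‖∑ i, inner 𝕜 (f i) (g i)‖ := by
        rw [sum_inner_eq_finrank_of_reconstruction hfg, RCLike.norm_natCast]
    _ ≤ ∑ i, ‖inner 𝕜 (f i) (g i)‖ := norm_sum_le _ _
    _ = ∑ i, ‖inner 𝕜 (g i) (f i)‖ := by simp_rw [norm_inner_symm (f _)]

theorem Real.mean_le_rpow_mean {ι : Type*} [Fintype ι] {z : ι → ℝ} (hz : ∀ i, 0 ≤ z i)
    {p : ℝ} (hp : 1 ≤ p) :
    1 / (Fintype.card ι : ℝ) * ∑ i, z i ≤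
      (1 / (Fintype.card ι : ℝ) * ∑ i, z i ^ p) ^ (1 / p) := by
  cases isEmpty_or_nonempty ι
  · simp only [Finset.univ_eq_empty, Finset.sum_empty, mul_zero]
    exact Real.rpow_nonneg le_rfl _
  · simpa only [Finset.mul_sum] using Real.arith_mean_le_rpow_mean Finset.univ
      (fun _ => 1 / (Fintype.card ι : ℝ)) z (fun _ _ => by positivity)
      (by simp [Finset.card_univ]) (fun i _ => hz i) hp

/-- For a dual pair `(F, G)` of `N`-element families in an
`n`-dimensional complex inner product space and `p ≥ 1`, the `1`-erasure spectral
average error `AE_R^{(1),p}(F,G) = ((1/N) ∑ i, |⟨f i, g i⟩|^p)^(1/p)` is at least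
`n/N`.  (The paper's `⟨f i, g i⟩` is Mathlib's `⟪g i, f i⟫`; powers with real
exponents are `Real.rpow`.) -/
theorem stmt_2 {H : Type*} [NormedAddCommGroup H] [InnerProductSpace ℂ H]
    [FiniteDimensional ℂ H] (n N : ℕ) (hn : Module.finrank ℂ H = n)
    (f g : Fin N → H)
    (hdual : ∀ x : H, x = ∑ i, ⟪f i, x⟫ • g i)
    (p : ℝ) (hp : 1 ≤ p) :
    (n : ℝ) / N ≤ ((1 / (N : ℝ)) * ∑ i, ‖⟪g i, f i⟫‖ ^ p) ^ (1 / p) := by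
  calc (n : ℝ) / N = 1 / (N : ℝ) * n := by ring
    _ ≤ 1 / (N : ℝ) * ∑ i, ‖⟪g i, f i⟫‖ := by
        gcongr
        exact hn ▸ finrank_le_sum_norm_inner_of_reconstruction hdual
    _ ≤ _ := by
        simpa using Real.mean_le_rpow_mean (fun i => norm_nonneg ⟪g i, f i⟫) hp
end

section
/- Let (F, G) be a dual pair of N-element families in an n-dimensional complex inner product space H and let p ≥ 1. Then the 1-erasure Frobenius average error satisfies AE_F^{(1),p}(F,G) = ((1/N) ∑_{i=1}^N (‖f_i‖·‖g_i‖)^p)^{1/p} ≥ n/N. -/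
open scoped ComplexInnerProductSpace

/-- For a dual pair `(F, G)` of `N`-element families in an
`n`-dimensional complex inner product space and `p ≥ 1`, the `1`-erasure Frobenius
average error `AE_F^{(1),p}(F,G) = ((1/N) ∑ i, (‖f i‖·‖g i‖)^p)^(1/p)` is at least
`n/N`. -/
theorem stmt_3 {H : Type*} [NormedAddCommGroup H] [InnerProductSpace ℂ H]
    [FiniteDimensional ℂ H] (n N : ℕ) (hn : Module.finrank ℂ H = n)
    (f g : Fin N → H)
    (hdual : ∀ x : H, x = ∑ i, ⟪f i, x⟫ • g i)
    (p : ℝ) (hp : 1 ≤ p) :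
    (n : ℝ) / N ≤ ((1 / (N : ℝ)) * ∑ i, (‖f i‖ * ‖g i‖) ^ p) ^ (1 / p) := by
  rcases Nat.eq_zero_or_pos N with hN | hN
  · subst hN
    have hH : ∀ x : H, x = 0 := by
      intro x; simpa using hdual x
    have hn0 : n = 0 := by
      rw [← hn]
      have : Subsingleton H := ⟨fun a b => by rw [hH a, hH b]⟩
      simp [Module.finrank_zero_of_subsingleton]
    simp only [hn0, Nat.cast_zero, zero_div]
    positivity
  have hNpos : (0:ℝ) < N := by exact_mod_cast hN
  -- Step A: n ≤ ∑ ‖f i‖ * ‖g i‖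
  set b := stdOrthonormalBasis ℂ H
  have htrace : (Module.finrank ℂ H : ℂ) = ∑ i, ⟪f i, g i⟫ := by
    have h1 : ∀ j, (1:ℂ) = ∑ i, ⟪f i, b j⟫ * ⟪b j, g i⟫ := by
      intro j
      calc (1:ℂ) = ⟪b j, b j⟫ := by
            simp [inner_self_eq_norm_sq_to_K, b.orthonormal.1 j]
        _ = ⟪b j, ∑ i, ⟪f i, b j⟫ • g i⟫ := by rw [← hdual (b j)]
        _ = ∑ i, ⟪f i, b j⟫ * ⟪b j, g i⟫ := by
            rw [inner_sum]; simp [inner_smul_right]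
    calc (Module.finrank ℂ H : ℂ) = ∑ _j : Fin (Module.finrank ℂ H), (1:ℂ) := by simp
      _ = ∑ j, ∑ i, ⟪f i, b j⟫ * ⟪b j, g i⟫ := by
          exact Finset.sum_congr rfl fun j _ => h1 j
      _ = ∑ i, ∑ j, ⟪f i, b j⟫ * ⟪b j, g i⟫ := Finset.sum_comm
      _ = ∑ i, ⟪f i, g i⟫ := by
          exact Finset.sum_congr rfl fun i _ => b.sum_inner_mul_inner (f i) (g i)
  have hA : (n : ℝ) ≤ ∑ i, ‖f i‖ * ‖g i‖ := by
    have := congrArg Complex.re htrace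
    simp only [Complex.natCast_re] at this
    rw [hn] at this
    rw [this, Complex.re_sum]
    refine Finset.sum_le_sum fun i _ => ?_
    calc (⟪f i, g i⟫ : ℂ).re ≤ ‖(⟪f i, g i⟫ : ℂ)‖ := Complex.re_le_norm _
      _ ≤ ‖f i‖ * ‖g i‖ := norm_inner_le_norm _ _
  -- Step B + C
  have hC : ∑ i, (1/(N:ℝ)) * (‖f i‖ * ‖g i‖) ≤
      (∑ i, (1/(N:ℝ)) * (‖f i‖ * ‖g i‖) ^ p) ^ (1/p) := by
    refine Real.arith_mean_le_rpow_mean Finset.univ _ _ (fun i _ => by positivity) ?_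
      (fun i _ => by positivity) hp
    simp [Finset.sum_const, hNpos.ne']
  calc (n : ℝ) / N = (1/(N:ℝ)) * n := by ring
    _ ≤ (1/(N:ℝ)) * ∑ i, ‖f i‖ * ‖g i‖ := by
        apply mul_le_mul_of_nonneg_left hA (by positivity)
    _ = ∑ i, (1/(N:ℝ)) * (‖f i‖ * ‖g i‖) := by rw [Finset.mul_sum]
    _ ≤ (∑ i, (1/(N:ℝ)) * (‖f i‖ * ‖g i‖) ^ p) ^ (1/p) := hC
    _ = ((1 / (N : ℝ)) * ∑ i, (‖f i‖ * ‖g i‖) ^ p) ^ (1/p) := by rw [Finset.mul_sum]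
end

section
/- Let F = (f_1,…,f_N) be a uniform Parseval frame for an n-dimensional complex inner product space H (so ∑_{i=1}^N |⟨x,f_i⟩|² = ‖x‖² for all x ∈ H and ‖f_i‖² = n/N for all i), and let p > 2. If G = (g_1,…,g_N) is a dual frame of F with ((1/N) ∑_{i=1}^N (‖f_i‖·‖g_i‖)^p)^{1/p} ≤ n/N, then g_i = f_i for all i. In particular, F (which is its own canonical dual) is the unique dual frame of F minimizing the 1-erasure Frobenius average error AE_F^{(1),p}(F,·), and the minimal value is n/N. -/
open scoped ComplexInnerProductSpace

/-!
The trace of the identity of `H` is `n`, and expanding the identity as `x ↦ ∑ ⟪f i, x⟫ • g i`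
shows that `∑ ⟪f i, g i⟫ = n` for every dual frame `g`; hence `∑ ‖f i‖ * ‖g i‖ ≥ n`. The arithmetic
mean of the numbers `‖f i‖ * ‖g i‖` is then at least `n / N`, while the hypothesis says their
`p`-power mean is at most `n / N`. Since `x ↦ x ^ p` is strictly convex, both means equal `n / N`
and every `‖f i‖ * ‖g i‖ = n / N = ‖f i‖ ^ 2`. The Cauchy–Schwarz inequality
`re ⟪f i, g i⟫ ≤ ‖f i‖ * ‖g i‖` must then be an equality term by term, and together with
`‖g i‖ = ‖f i‖` this gives `‖f i - g i‖ = 0`.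
-/

open Finset InnerProductSpace RCLike
open scoped InnerProductSpace

section DualFrame

variable {𝕜 E ι : Type*} [RCLike 𝕜] [NormedAddCommGroup E] [InnerProductSpace 𝕜 E] [Fintype ι]

def IsDualFrame (f g : ι → E) : Prop :=
  ∀ x, x = ∑ i, ⟪f i, x⟫_𝕜 • g i

theorem IsDualFrame.sum_inner_eq_finrank [FiniteDimensional 𝕜 E] {f g : ι → E}
    (hdual : IsDualFrame (𝕜 := 𝕜) f g) : ∑ i, ⟪f i, g i⟫_𝕜 = Module.finrank 𝕜 E := by
  have hid : ∑ i, (rankOne 𝕜 (g i) (f i) : E →ₗ[𝕜] E) = LinearMap.id := by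
    ext x
    simpa [rankOne_apply] using (hdual x).symm
  simpa [trace_rankOne] using congrArg (LinearMap.trace 𝕜 E) hid

theorem le_sum_norm_mul_norm_of_sum_inner_eq {f g : ι → E} {c : ℝ}
    (hsum : ∑ i, ⟪f i, g i⟫_𝕜 = c) : c ≤ ∑ i, ‖f i‖ * ‖g i‖ := by
  rw [← ofReal_re (K := 𝕜) c, ← hsum, map_sum]
  exact sum_le_sum fun i _ => re_inner_le_norm (f i) (g i)

theorem re_inner_eq_norm_mul_norm_of_sum_norm_mul_norm_le {f g : ι → E} {c : ℝ}
    (hsum : ∑ i, ⟪f i, g i⟫_𝕜 = c) (hle : ∑ i, ‖f i‖ * ‖g i‖ ≤ c) (i : ι) :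
    re ⟪f i, g i⟫_𝕜 = ‖f i‖ * ‖g i‖ := by
  have hre_le : ∀ j ∈ univ, re ⟪f j, g j⟫_𝕜 ≤ ‖f j‖ * ‖g j‖ :=
    fun j _ => re_inner_le_norm (f j) (g j)
  have hre_sum : ∑ j, re ⟪f j, g j⟫_𝕜 = c := by
    rw [← map_sum, hsum, ofReal_re]
  refine (sum_eq_sum_iff_of_le hre_le).mp ?_ i (mem_univ i)
  exact le_antisymm (sum_le_sum hre_le) (hre_sum ▸ hle)

end DualFrame

theorem eq_of_re_inner_eq_norm_mul_norm {𝕜 E : Type*} [RCLike 𝕜] [NormedAddCommGroup E]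
    [InnerProductSpace 𝕜 E] {x y : E} (hre : re ⟪x, y⟫_𝕜 = ‖x‖ * ‖y‖) (hnorm : ‖x‖ = ‖y‖) :
    x = y := by
  have : ‖x - y‖ ^ 2 = 0 := by
    rw [norm_sub_sq (𝕜 := 𝕜), hre, hnorm]; ring
  simpa [sub_eq_zero] using this

section PowerMean

variable {ι : Type*} [Fintype ι] [Nonempty ι]

theorem rpow_mean_const {c p : ℝ} (hc : 0 ≤ c) (hp : p ≠ 0) :
    ((1 / (Fintype.card ι : ℝ)) * ∑ _i : ι, c ^ p) ^ (1 / p) = c := by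
  rw [sum_const, card_univ, nsmul_eq_mul, ← mul_assoc, one_div_mul_cancel (by positivity),
    one_mul, ← Real.rpow_mul hc, mul_one_div_cancel hp, Real.rpow_one]

theorem eq_of_le_mean_of_rpow_mean_le {a : ι → ℝ} {b p : ℝ} (hp : 1 < p)
    (ha : ∀ i, 0 ≤ a i) (hb : 0 ≤ b)
    (hmean : b ≤ (1 / (Fintype.card ι : ℝ)) * ∑ i, a i)
    (hpow : ((1 / (Fintype.card ι : ℝ)) * ∑ i, a i ^ p) ^ (1 / p) ≤ b) (j : ι) :
    a j = b := by
  set w : ℝ := 1 / Fintype.card ι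
  have hw : 0 < w := by positivity
  have hw_sum : ∑ _i : ι, w = 1 := by simp [w]
  rw [mul_sum] at hmean hpow
  have hm : ∑ i, w * a i = b :=
    le_antisymm ((Real.arith_mean_le_rpow_mean _ _ _ (fun _ _ => hw.le) hw_sum
      (fun i _ => ha i) hp.le).trans hpow) hmean
  have hjensen : ∑ i, w * a i ^ p ≤ (∑ i, w * a i) ^ p := by
    have hnonneg : 0 ≤ ∑ i, w * a i ^ p :=
      sum_nonneg fun i _ => mul_nonneg hw.le (Real.rpow_nonneg (ha i) p)
    rwa [hm, ← Real.rpow_inv_le_iff_of_pos hnonneg hb (by linarith), ← one_div]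
  have hconst : ∀ k, a k = a j := fun k =>
    (strictConvexOn_rpow hp).eq_of_le_map_sum (fun _ _ => hw) hw_sum (fun i _ => ha i)
      hjensen (mem_univ k) (mem_univ j)
  rw [← hm, Fintype.sum_congr _ _ (fun k => by rw [hconst k]), ← sum_mul, hw_sum, one_mul]

end PowerMean

theorem stmt_4_general {H : Type*} [NormedAddCommGroup H] [InnerProductSpace ℂ H]
    [FiniteDimensional ℂ H] (n N : ℕ) (hn : Module.finrank ℂ H = n)
    (f : Fin N → H)
    (huniform : ∀ i, ‖f i‖ ^ 2 = (n : ℝ) / N)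
    (p : ℝ) (hp : 2 < p)
    (g : Fin N → H)
    (hdual : ∀ x : H, x = ∑ i, ⟪f i, x⟫ • g i)
    (hopt : ((1 / (N : ℝ)) * ∑ i, (‖f i‖ * ‖g i‖) ^ p) ^ (1 / p) ≤ (n : ℝ) / N) :
    (∀ i, g i = f i) ∧
      ((1 / (N : ℝ)) * ∑ i, (‖f i‖ * ‖f i‖) ^ p) ^ (1 / p) = (n : ℝ) / N := by
  have hp1 : 1 < p := by linarith
  rcases N.eq_zero_or_pos with rfl | hN
  · simp [Real.zero_rpow (inv_ne_zero (by linarith : p ≠ 0))]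
  have : Nonempty (Fin N) := ⟨⟨0, hN⟩⟩
  have hff : ∀ i, ‖f i‖ * ‖f i‖ = n / N := fun i => by rw [← sq, huniform]
  have hself := rpow_mean_const (ι := Fin N) (c := n / N) (by positivity) (p := p) (by linarith)
  refine ⟨?_, by simpa [hff] using hself⟩
  rcases n.eq_zero_or_pos with rfl | hn_pos
  · have : Subsingleton H := Module.finrank_zero_iff.mp hn
    exact fun i => Subsingleton.elim _ _
  have htrace : ∑ i, ⟪f i, g i⟫ = ((n : ℝ) : ℂ) := by
    rw [IsDualFrame.sum_inner_eq_finrank hdual, hn]; simp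
  have hnorm_mul : ∀ i, ‖f i‖ * ‖g i‖ = n / N := by
    refine eq_of_le_mean_of_rpow_mean_le hp1 (fun i => by positivity) (by positivity) ?_
      (by simpa using hopt)
    rw [Fintype.card_fin, one_div, ← div_eq_inv_mul]
    gcongr
    exact le_sum_norm_mul_norm_of_sum_inner_eq (c := n) htrace
  have hre := re_inner_eq_norm_mul_norm_of_sum_norm_mul_norm_le (c := n) htrace
    (by simpa [hnorm_mul] using (mul_div_cancel₀ (n : ℝ) (by positivity : (N : ℝ) ≠ 0)).le)
  intro i
  have hf_pos : 0 < ‖f i‖ := by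
    refine lt_of_pow_lt_pow_left₀ 2 (norm_nonneg _) ?_
    rw [huniform, zero_pow two_ne_zero]; positivity
  exact (eq_of_re_inner_eq_norm_mul_norm (hre i)
    (mul_left_cancel₀ hf_pos.ne' ((hff i).trans (hnorm_mul i).symm))).symm

/-- Let `F` be a uniform Parseval frame for an `n`-dimensional
complex inner product space `H` (so `∑ i, |⟨x, f i⟩|² = ‖x‖²` for all `x` and
`‖f i‖² = n/N` for all `i`), and let `p > 2`.  If `G` is a dual frame of `F`
whose `1`-erasure Frobenius average error satisfies
`((1/N) ∑ i, (‖f i‖·‖g i‖)^p)^(1/p) ≤ n/N`, then `g i = f i` for all `i`;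
moreover the error of `F` with itself (its canonical dual) equals `n/N`,
so `F` is the unique minimizer and the minimal value is `n/N`. -/
theorem stmt_4 {H : Type*} [NormedAddCommGroup H] [InnerProductSpace ℂ H]
    [FiniteDimensional ℂ H] (n N : ℕ) (hn : Module.finrank ℂ H = n)
    (f : Fin N → H)
    (hParseval : ∀ x : H, ∑ i, ‖⟪f i, x⟫‖ ^ 2 = ‖x‖ ^ 2)
    (huniform : ∀ i, ‖f i‖ ^ 2 = (n : ℝ) / N)
    (p : ℝ) (hp : 2 < p)
    (g : Fin N → H)
    (hdual : ∀ x : H, x = ∑ i, ⟪f i, x⟫ • g i)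
    (hopt : ((1 / (N : ℝ)) * ∑ i, (‖f i‖ * ‖g i‖) ^ p) ^ (1 / p) ≤ (n : ℝ) / N) :
    (∀ i, g i = f i) ∧
      ((1 / (N : ℝ)) * ∑ i, (‖f i‖ * ‖f i‖) ^ p) ^ (1 / p) = (n : ℝ) / N :=
  stmt_4_general n N hn f huniform p hp g hdual hopt
end

section
/- Let s ≥ 1, let L > 0, and let L_1,…,L_s and α_1,…,α_s be real numbers with L_i ≥ L and L_i² + α_i ≥ 0 for all 1 ≤ i ≤ s. Let p > 2. If ∑_{i=1}^s (L_i² + α_i)^{p/2} ≤ s·L^p and ∑_{i=1}^s α_i = 0, then α_i = 0 and L_i = L for all 1 ≤ i ≤ s. -/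
open Real Finset

/-- Tangent line inequality for `rpow`, non-strict. -/
lemma tangent_le {a : ℝ} (ha : 0 < a) {q : ℝ} (hq : 1 < q) {x : ℝ} (hx : 0 ≤ x) :
    a ^ q + q * a ^ (q - 1) * (x - a) ≤ x ^ q := by
  have hs : (-1 : ℝ) ≤ x / a - 1 := by
    have : 0 ≤ x / a := div_nonneg hx ha.le
    linarith
  have hb := one_add_mul_self_le_rpow_one_add hs hq.le
  have h1 : (1 : ℝ) + (x / a - 1) = x / a := by ring
  rw [h1] at hb
  have hb2 := mul_le_mul_of_nonneg_left hb (Real.rpow_nonneg ha.le q)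
  have hd : (x / a) ^ q = x ^ q / a ^ q := Real.div_rpow hx ha.le q
  have hane : a ^ q ≠ 0 := (Real.rpow_pos_of_pos ha q).ne'
  have hsub : a ^ (q - 1) = a ^ q / a := Real.rpow_sub_one ha.ne' q
  rw [hd] at hb2
  have hr : a ^ q * (x ^ q / a ^ q) = x ^ q := by field_simp
  rw [hr] at hb2
  calc a ^ q + q * a ^ (q - 1) * (x - a)
      = a ^ q * (1 + q * (x / a - 1)) := by rw [hsub]; field_simp
    _ ≤ x ^ q := hb2

/-- Tangent line inequality for `rpow`, strict. -/
lemma tangent_lt {a : ℝ} (ha : 0 < a) {q : ℝ} (hq : 1 < q) {x : ℝ} (hx : 0 ≤ x)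
    (hxa : x ≠ a) : a ^ q + q * a ^ (q - 1) * (x - a) < x ^ q := by
  have hs : (-1 : ℝ) ≤ x / a - 1 := by
    have : 0 ≤ x / a := div_nonneg hx ha.le
    linarith
  have hs0 : x / a - 1 ≠ 0 := by
    intro h
    apply hxa
    field_simp at h
    linarith
  have hb := one_add_mul_self_lt_rpow_one_add hs hs0 hq
  have h1 : (1 : ℝ) + (x / a - 1) = x / a := by ring
  rw [h1] at hb
  have hb2 := (mul_lt_mul_iff_right₀ (Real.rpow_pos_of_pos ha q)).2 hb
  have hd : (x / a) ^ q = x ^ q / a ^ q := Real.div_rpow hx ha.le q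
  have hane : a ^ q ≠ 0 := (Real.rpow_pos_of_pos ha q).ne'
  have hsub : a ^ (q - 1) = a ^ q / a := Real.rpow_sub_one ha.ne' q
  rw [hd] at hb2
  have hr : a ^ q * (x ^ q / a ^ q) = x ^ q := by field_simp
  rw [hr] at hb2
  calc a ^ q + q * a ^ (q - 1) * (x - a)
      = a ^ q * (1 + q * (x / a - 1)) := by rw [hsub]; field_simp
    _ < x ^ q := hb2

/-- Let `s ≥ 1`, `L > 0`, and let `L₁,…,L_s`, `α₁,…,α_s` be real
numbers with `L i ≥ L` and `L i ² + α i ≥ 0` for all `i`.  Let `p > 2`.  If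
`∑ i, (L i ² + α i)^(p/2) ≤ s · L^p` and `∑ i, α i = 0`, then `α i = 0` and
`L i = L` for all `i`.  (Powers with real exponents are `Real.rpow`.) -/
theorem stmt_5 (s : ℕ) (hs : 1 ≤ s) (L : ℝ) (hL : 0 < L)
    (Li α : Fin s → ℝ)
    (hLi : ∀ i, L ≤ Li i) (hnn : ∀ i, 0 ≤ Li i ^ 2 + α i)
    (p : ℝ) (hp : 2 < p)
    (hsum : ∑ i, (Li i ^ 2 + α i) ^ (p / 2) ≤ (s : ℝ) * L ^ p)
    (hα : ∑ i, α i = 0) :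
    ∀ i, α i = 0 ∧ Li i = L := by
  have hq : 1 < p / 2 := by linarith
  have ha : (0:ℝ) < L ^ 2 := by positivity
  have hLp : ((L:ℝ) ^ 2) ^ (p / 2) = L ^ p := by
    rw [← Real.rpow_natCast L 2, ← Real.rpow_mul hL.le]
    congr 1
    push_cast
    ring
  set c : ℝ := (p / 2) * (L ^ 2) ^ (p / 2 - 1) with hc_def
  have hc : 0 < c := by
    apply mul_pos (by linarith)
    exact Real.rpow_pos_of_pos ha _
  have hterm : ∀ i : Fin s, L ^ p + c * ((Li i ^ 2 + α i) - L ^ 2)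
      ≤ (Li i ^ 2 + α i) ^ (p / 2) := by
    intro i
    have := tangent_le ha hq (hnn i)
    rwa [hLp] at this
  have hsq : ∀ i : Fin s, L ^ 2 ≤ Li i ^ 2 := fun i =>
    pow_le_pow_left₀ hL.le (hLi i) 2
  have hT : 0 ≤ ∑ i, (Li i ^ 2 - L ^ 2) :=
    Finset.sum_nonneg fun i _ => by linarith [hsq i]
  have hLHS : ∑ i, (L ^ p + c * ((Li i ^ 2 + α i) - L ^ 2))
      = (s : ℝ) * L ^ p + c * ∑ i, (Li i ^ 2 - L ^ 2) := by
    rw [Finset.sum_add_distrib, Finset.sum_const, Finset.card_univ, Fintype.card_fin,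
      ← Finset.mul_sum, nsmul_eq_mul]
    congr 1
    congr 1
    have h1 : ∑ i, ((Li i ^ 2 + α i) - L ^ 2)
        = (∑ i, (Li i ^ 2 - L ^ 2)) + ∑ i, α i := by
      rw [← Finset.sum_add_distrib]
      exact Finset.sum_congr rfl fun i _ => by ring
    rw [h1, hα, add_zero]
  have hchain : (s : ℝ) * L ^ p + c * ∑ i, (Li i ^ 2 - L ^ 2) ≤ (s : ℝ) * L ^ p := by
    calc (s : ℝ) * L ^ p + c * ∑ i, (Li i ^ 2 - L ^ 2)
        = ∑ i, (L ^ p + c * ((Li i ^ 2 + α i) - L ^ 2)) := hLHS.symm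
      _ ≤ ∑ i, (Li i ^ 2 + α i) ^ (p / 2) := Finset.sum_le_sum fun i _ => hterm i
      _ ≤ (s : ℝ) * L ^ p := hsum
  have hT0 : ∑ i, (Li i ^ 2 - L ^ 2) = 0 := by
    have : c * ∑ i, (Li i ^ 2 - L ^ 2) ≤ 0 := by linarith
    nlinarith
  -- each g i = L^2
  have hgi : ∀ i : Fin s, Li i ^ 2 + α i = L ^ 2 := by
    by_contra h
    push_neg at h
    obtain ⟨j, hj⟩ := h
    have hlt : ∑ i, (L ^ p + c * ((Li i ^ 2 + α i) - L ^ 2))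
        < ∑ i, (Li i ^ 2 + α i) ^ (p / 2) := by
      apply Finset.sum_lt_sum (fun i _ => hterm i) ⟨j, Finset.mem_univ j, ?_⟩
      have := tangent_lt ha hq (hnn j) hj
      rwa [hLp] at this
    rw [hLHS, hT0, mul_zero, add_zero] at hlt
    exact absurd hsum (not_le.2 hlt)
  -- termwise Li i ^ 2 = L ^ 2
  have hLieq : ∀ i : Fin s, Li i ^ 2 = L ^ 2 := by
    have := (Finset.sum_eq_zero_iff_of_nonneg
      (fun i _ => by linarith [hsq i] : ∀ i ∈ Finset.univ, 0 ≤ Li i ^ 2 - L ^ 2)).1 hT0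
    intro i
    have := this i (Finset.mem_univ i)
    linarith
  intro i
  have h1 : α i = 0 := by
    have := hgi i
    have := hLieq i
    linarith
  refine ⟨h1, ?_⟩
  have h2 : Li i ^ 2 = L ^ 2 := hLieq i
  have hle : Li i ≤ L := by nlinarith [hLi i]
  exact le_antisymm hle (hLi i)
end

section
/- Let F = (f_1,…,f_N) be a frame for an n-dimensional complex inner product space H, with frame operator S_F, and let p > 2. Set L := max_{1≤i≤N} ‖f_i‖·‖S_F^{-1} f_i‖, η₁ := {i : ‖f_i‖·‖S_F^{-1} f_i‖ = L}, η₂ := {1,…,N} \ η₁, and H_j := span{f_i : i ∈ η_j} for j = 1,2. Assume: (i) H₁ ∩ H₂ = {0}; (ii) there is a constant c > 0 with ‖f_i‖ = c for all i ∈ η₁; (iii) the family {f_i : i ∈ η₂} is linearly independent. Then every dual frame G of F satisfying ((1/N)∑_{i=1}^N (‖f_i‖·‖g_i‖)^p)^{1/p} ≤ ((1/N)∑_{i=1}^N (‖f_i‖·‖S_F^{-1}f_i‖)^p)^{1/p} must satisfy g_i = S_F^{-1} f_i for all i. In particular, the canonical dual S_F^{-1}F minimizes the 1-erasure Frobenius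 average error AE_F^{(1),p}(F,·) among all dual frames of F. -/
open scoped ComplexInnerProductSpace

/-!
Write a dual frame as `g i = S⁻¹ f i + u i`. Duality of both `g` and `S⁻¹ f` says
`∑ i, ⟪f i, x⟫ • u i = 0` for all `x`; taking adjoints, `∑ i, ⟪u i, x⟫ • f i = 0`, and
hypotheses (i) and (iii) force `u i = 0` off the level set `η₁ = {i | ‖f i‖ ‖S⁻¹ f i‖ = L}`.
Since `S⁻¹` is symmetric, also `∑ i, ⟪S⁻¹ f i, x⟫ • u i = 0`, and the trace of this zero
operator gives `∑ i, ⟪S⁻¹ f i, u i⟫ = 0`.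
On `η₁` the tangent line of the convex function `t ↦ t ^ (p / 2)` at `L ^ 2` gives
`(‖f i‖ ‖g i‖) ^ p ≥ L ^ p + K (2 re ⟪S⁻¹ f i, u i⟫ + ‖u i‖ ^ 2)` with `K = p/2 L^(p-2) c^2`,
a constant independent of `i` because of (ii). Summing, the cross terms cancel, and comparing
with the canonical dual leaves `K ∑ i, ‖u i‖ ^ 2 ≤ 0`.
-/

open Finset RCLike

theorem rpow_add_mul_sq_sub_sq_le {p s t : ℝ} (hp : 2 ≤ p) (hs : 0 < s) (ht : 0 ≤ t) :
    s ^ p + p / 2 * s ^ (p - 2) * (t ^ 2 - s ^ 2) ≤ t ^ p := by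
  have hx : -1 ≤ (t / s) ^ 2 - 1 := by linarith [sq_nonneg (t / s)]
  have hb := one_add_mul_self_le_rpow_one_add hx (by linarith : 1 ≤ p / 2)
  have hpow : ((t / s) ^ 2) ^ (p / 2) = t ^ p / s ^ p := by
    rw [← Real.rpow_natCast, ← Real.rpow_mul (div_nonneg ht hs.le), Real.div_rpow ht hs.le,
      Nat.cast_ofNat, mul_div_cancel₀ p two_ne_zero]
  have hsp : s ^ p = s ^ (p - 2) * s ^ 2 := by
    rw [← Real.rpow_natCast, ← Real.rpow_add hs]; norm_num
  rw [add_sub_cancel, hpow, le_div_iff₀ (Real.rpow_pos_of_pos hs _), hsp] at hb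
  rw [hsp]
  field_simp at hb
  nlinarith [hb]

theorem coeff_eq_zero_of_disjoint_span {ι R M : Type*} [Fintype ι] [Ring R] [AddCommGroup M]
    [Module R M] {v : ι → M} {P : ι → Prop}
    (hdisj : Disjoint (Submodule.span R (v '' {i | P i})) (Submodule.span R (v '' {i | ¬P i})))
    (hli : LinearIndependent R fun i : {i // ¬P i} => v i) {c : ι → R}
    (hc : ∑ i, c i • v i = 0) {i : ι} (hi : ¬P i) : c i = 0 := by
  classical
  have hmem : ∀ (Q : ι → Prop) [DecidablePred Q],
      ∑ j : {j // Q j}, c j • v j ∈ Submodule.span R (v '' {j | Q j}) := fun Q _ =>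
    Submodule.sum_mem _ fun j _ => Submodule.smul_mem _ _ (Submodule.subset_span ⟨j, j.2, rfl⟩)
  have hsplit := Fintype.sum_subtype_add_sum_subtype P fun j => c j • v j
  rw [hc] at hsplit
  have hzero : ∑ j : {j // ¬P j}, c j • v j = 0 := by
    refine Submodule.disjoint_def.1 hdisj _ ?_ (hmem _)
    rw [eq_neg_of_add_eq_zero_right hsplit]
    exact neg_mem (hmem P)
  exact Fintype.linearIndependent_iff.1 hli (fun j => c j) hzero ⟨i, hi⟩

section InnerProduct

open scoped InnerProductSpace

variable {𝕜 E ι : Type*} [RCLike 𝕜] [NormedAddCommGroup E] [InnerProductSpace 𝕜 E] [Fintype ι]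

theorem mul_norm_rpow_add_le {p a : ℝ} (hp : 2 ≤ p) {h : E} (hs : 0 < a * ‖h‖) (u : E) :
    (a * ‖h‖) ^ p + p / 2 * (a * ‖h‖) ^ (p - 2) * a ^ 2 * (2 * re ⟪h, u⟫_𝕜 + ‖u‖ ^ 2) ≤
      (a * ‖h + u‖) ^ p := by
  have ha : 0 ≤ a := (pos_of_mul_pos_left hs (norm_nonneg h)).le
  have hsq : (a * ‖h + u‖) ^ 2 - (a * ‖h‖) ^ 2 = a ^ 2 * (2 * re ⟪h, u⟫_𝕜 + ‖u‖ ^ 2) := by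
    rw [mul_pow, mul_pow, norm_add_sq (𝕜 := 𝕜)]; ring
  have := rpow_add_mul_sq_sub_sq_le hp hs (mul_nonneg ha (norm_nonneg (h + u)))
  rw [hsq] at this
  linarith

theorem sum_inner_smul_swap_eq_zero {a b : ι → E} (h : ∀ x, ∑ i, ⟪a i, x⟫_𝕜 • b i = 0)
    (x : E) : ∑ i, ⟪b i, x⟫_𝕜 • a i = 0 := by
  refine ext_inner_right 𝕜 fun y => ?_
  have hy := congr_arg (fun v => ⟪x, v⟫_𝕜) (h y)
  simp only [inner_sum, inner_smul_right, inner_zero_right] at hy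
  simp only [sum_inner, inner_smul_left, inner_conj_symm, inner_zero_left]
  rw [← hy]
  exact sum_congr rfl fun i _ => mul_comm _ _

/-- The trace of `x ↦ ∑ i, ⟪a i, x⟫ • b i` is `∑ i, ⟪a i, b i⟫`. -/
theorem sum_inner_eq_zero_of_sum_inner_smul_eq_zero [FiniteDimensional 𝕜 E] {a b : ι → E}
    (h : ∀ x, ∑ i, ⟪a i, x⟫_𝕜 • b i = 0) : ∑ i, ⟪a i, b i⟫_𝕜 = 0 := by
  let e := stdOrthonormalBasis 𝕜 E
  calc ∑ i, ⟪a i, b i⟫_𝕜 = ∑ i, ∑ k, ⟪a i, e k⟫_𝕜 * ⟪e k, b i⟫_𝕜 := by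
        simp only [e.sum_inner_mul_inner]
    _ = ∑ k, ⟪e k, ∑ i, ⟪a i, e k⟫_𝕜 • b i⟫_𝕜 := by
        rw [sum_comm]; simp only [inner_sum, inner_smul_right]
    _ = 0 := by simp only [h, inner_zero_right, sum_const_zero]

theorem eq_zero_of_sum_mul_norm_add_rpow_le {p c L : ℝ} (hp : 2 ≤ p) (hc : 0 < c) (hL : 0 < L)
    {a : ι → ℝ} {h u : ι → E} (hlevel : ∀ i, a i * ‖h i‖ = L → a i = c)
    (hoff : ∀ i, a i * ‖h i‖ ≠ L → u i = 0) (htrace : ∑ i, ⟪h i, u i⟫_𝕜 = 0)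
    (hle : ∑ i, (a i * ‖h i + u i‖) ^ p ≤ ∑ i, (a i * ‖h i‖) ^ p) (i : ι) : u i = 0 := by
  set K := p / 2 * L ^ (p - 2) * c ^ 2
  have hK : 0 < K := by positivity
  have hterm : ∀ j, (a j * ‖h j‖) ^ p + K * (2 * re ⟪h j, u j⟫_𝕜 + ‖u j‖ ^ 2) ≤
      (a j * ‖h j + u j‖) ^ p := by
    intro j
    by_cases hj : a j * ‖h j‖ = L
    · have := mul_norm_rpow_add_le (𝕜 := 𝕜) hp (hj ▸ hL) (u j)
      rw [hj, hlevel j hj] at this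
      rw [hj, hlevel j hj]
      simpa only [K, mul_assoc] using this
    · simp [hoff j hj]
  have hre : ∑ j, re ⟪h j, u j⟫_𝕜 = 0 := by rw [← map_sum, htrace, map_zero]
  have hsum := sum_le_sum fun j (_ : j ∈ univ) => hterm j
  rw [sum_add_distrib, ← mul_sum, sum_add_distrib, ← mul_sum, hre] at hsum
  have hnorm : ∑ j, ‖u j‖ ^ 2 = 0 :=
    le_antisymm (by nlinarith) (sum_nonneg fun j _ => sq_nonneg _)
  simpa using (sum_eq_zero_iff_of_nonneg fun j _ => sq_nonneg ‖u j‖).1 hnorm i (mem_univ i)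

variable {f : ι → E} {Sinv : E →ₗ[𝕜] E}

theorem isSymmetric_of_sum_inner_smul_eq_self (hS : ∀ x, ∑ i, ⟪f i, Sinv x⟫_𝕜 • f i = x) :
    Sinv.IsSymmetric := by
  intro x y
  conv_lhs => rw [← hS y]
  conv_rhs => rw [← hS x]
  simp only [inner_sum, sum_inner, inner_smul_right, inner_smul_left, inner_conj_symm]
  exact sum_congr rfl fun i _ => mul_comm _ _

theorem eq_sum_inner_smul_map_of_map_sum_eq_self
    (hS : ∀ x, Sinv (∑ i, ⟪f i, x⟫_𝕜 • f i) = x) (x : E) :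
    x = ∑ i, ⟪f i, x⟫_𝕜 • Sinv (f i) := by
  conv_lhs => rw [← hS x]
  simp only [map_sum, map_smul]

theorem dual_eq_map_of_sum_rpow_le [FiniteDimensional 𝕜 E] {p L c : ℝ} (hp : 2 ≤ p)
    (hc : 0 < c) (hS₁ : ∀ x, ∑ i, ⟪f i, Sinv x⟫_𝕜 • f i = x)
    (hS₂ : ∀ x, Sinv (∑ i, ⟪f i, x⟫_𝕜 • f i) = x)
    (hdisj : Disjoint (Submodule.span 𝕜 (f '' {i | ‖f i‖ * ‖Sinv (f i)‖ = L}))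
      (Submodule.span 𝕜 (f '' {i | ‖f i‖ * ‖Sinv (f i)‖ ≠ L})))
    (hlevel : ∀ i, ‖f i‖ * ‖Sinv (f i)‖ = L → ‖f i‖ = c)
    (hli : LinearIndependent 𝕜 fun i : {i // ‖f i‖ * ‖Sinv (f i)‖ ≠ L} => f i)
    {g : ι → E} (hg : ∀ x, x = ∑ i, ⟪f i, x⟫_𝕜 • g i)
    (hle : ∑ i, (‖f i‖ * ‖g i‖) ^ p ≤ ∑ i, (‖f i‖ * ‖Sinv (f i)‖) ^ p) (i : ι) :
    g i = Sinv (f i) := by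
  set u := fun j => g j - Sinv (f j)
  have hu : ∀ x, ∑ j, ⟪f j, x⟫_𝕜 • u j = 0 := fun x => by
    simp only [u, smul_sub, sum_sub_distrib, ← hg x,
      ← eq_sum_inner_smul_map_of_map_sum_eq_self hS₂ x, sub_self]
  have hoff : ∀ j, ‖f j‖ * ‖Sinv (f j)‖ ≠ L → u j = 0 := fun j hj =>
    inner_self_eq_zero.1 <| coeff_eq_zero_of_disjoint_span (v := f) hdisj hli
      (sum_inner_smul_swap_eq_zero hu (u j)) hj
  have htrace : ∑ j, ⟪Sinv (f j), u j⟫_𝕜 = 0 :=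
    sum_inner_eq_zero_of_sum_inner_smul_eq_zero fun x => by
      simpa only [isSymmetric_of_sum_inner_smul_eq_self hS₁ _ x] using hu (Sinv x)
  rw [← sub_eq_zero]
  by_cases hi : ‖f i‖ * ‖Sinv (f i)‖ = L
  · have hf : f i ≠ 0 := norm_pos_iff.1 (hlevel i hi ▸ hc)
    have hSf : Sinv (f i) ≠ 0 := fun h0 => hf (by simpa [h0] using (hS₁ (f i)).symm)
    have hL : 0 < L := hi ▸ mul_pos (norm_pos_iff.2 hf) (norm_pos_iff.2 hSf)
    refine eq_zero_of_sum_mul_norm_add_rpow_le hp hc hL hlevel hoff htrace ?_ i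
    simpa only [u, add_sub_cancel] using hle
  · exact hoff i hi

end InnerProduct

noncomputable def erasureAverageError {E : Type*} [NormedAddCommGroup E] {N : ℕ} (p : ℝ)
    (f g : Fin N → E) : ℝ :=
  ((1 / (N : ℝ)) * ∑ i, (‖f i‖ * ‖g i‖) ^ p) ^ (1 / p)

theorem erasureAverageError_le_iff {E : Type*} [NormedAddCommGroup E] {N : ℕ} {p : ℝ}
    (hN : 0 < N) (hp : 0 < p) {f g g' : Fin N → E} :
    erasureAverageError p f g ≤ erasureAverageError p f g' ↔
      ∑ i, (‖f i‖ * ‖g i‖) ^ p ≤ ∑ i, (‖f i‖ * ‖g' i‖) ^ p := by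
  unfold erasureAverageError
  rw [Real.rpow_le_rpow_iff (by positivity) (by positivity) (by positivity),
    mul_le_mul_iff_right₀ (by positivity)]

theorem stmt_6_general {H : Type*} [NormedAddCommGroup H] [InnerProductSpace ℂ H]
    [FiniteDimensional ℂ H] (N : ℕ)
    (f : Fin N → H)
    (Sinv : H →ₗ[ℂ] H)
    (hSinv₁ : ∀ x : H, ∑ i, ⟪f i, Sinv x⟫ • f i = x)
    (hSinv₂ : ∀ x : H, Sinv (∑ i, ⟪f i, x⟫ • f i) = x)
    (p : ℝ) (hp : 2 < p)
    (L : ℝ)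
    (hinter : Submodule.span ℂ (f '' {i | ‖f i‖ * ‖Sinv (f i)‖ = L}) ⊓
        Submodule.span ℂ (f '' {i | ‖f i‖ * ‖Sinv (f i)‖ ≠ L}) = ⊥)
    (hc : ∃ c : ℝ, 0 < c ∧ ∀ i, ‖f i‖ * ‖Sinv (f i)‖ = L → ‖f i‖ = c)
    (hli : LinearIndependent ℂ
        (fun i : {i : Fin N // ‖f i‖ * ‖Sinv (f i)‖ ≠ L} => f (i : Fin N))) :
    (∀ g : Fin N → H, (∀ x : H, x = ∑ i, ⟪f i, x⟫ • g i) →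
        ((1 / (N : ℝ)) * ∑ i, (‖f i‖ * ‖g i‖) ^ p) ^ (1 / p) ≤
          ((1 / (N : ℝ)) * ∑ i, (‖f i‖ * ‖Sinv (f i)‖) ^ p) ^ (1 / p) →
        ∀ i, g i = Sinv (f i)) ∧
    (∀ g : Fin N → H, (∀ x : H, x = ∑ i, ⟪f i, x⟫ • g i) →
        ((1 / (N : ℝ)) * ∑ i, (‖f i‖ * ‖Sinv (f i)‖) ^ p) ^ (1 / p) ≤
          ((1 / (N : ℝ)) * ∑ i, (‖f i‖ * ‖g i‖) ^ p) ^ (1 / p)) := by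
  obtain ⟨c, hc0, hlevel⟩ := hc
  have minimal : ∀ g : Fin N → H, (∀ x : H, x = ∑ i, ⟪f i, x⟫ • g i) →
      erasureAverageError p f g ≤ erasureAverageError p f (fun i => Sinv (f i)) →
      ∀ i, g i = Sinv (f i) := fun g hg hle i =>
    dual_eq_map_of_sum_rpow_le hp.le hc0 hSinv₁ hSinv₂ (disjoint_iff.2 hinter) hlevel hli hg
      ((erasureAverageError_le_iff i.pos (by linarith)).1 hle) i
  refine ⟨minimal, fun g hg => ?_⟩
  rcases le_total (erasureAverageError p f g) (erasureAverageError p f fun i => Sinv (f i))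
    with hle | hle
  · obtain rfl : g = fun i => Sinv (f i) := funext (minimal g hg hle)
    exact le_rfl
  · exact hle

/-- Let `F = (f₁,…,f_N)` be a frame for an `n`-dimensional complex
inner product space `H` with frame operator `S_F x = ∑ i, ⟨x, f i⟩ f i` (here
encoded through its inverse `Sinv`, characterized by the two identities below),
and let `p > 2`.  Let `L := max i, ‖f i‖·‖Sinv (f i)‖`, let
`η₁ = {i : ‖f i‖·‖Sinv (f i)‖ = L}`, `η₂` its complement, and `H j` the span of the
corresponding frame vectors.  Assume (i) `H₁ ∩ H₂ = {0}`; (ii) `‖f i‖` is a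
constant `c > 0` on `η₁`; (iii) `{f i : i ∈ η₂}` is linearly independent.  Then
every dual frame `G` of `F` whose `1`-erasure Frobenius average error is at most
that of the canonical dual satisfies `g i = Sinv (f i)` for all `i`; in
particular the canonical dual minimizes `AE_F^{(1),p}(F,·)` among all duals. -/
theorem stmt_6 {H : Type*} [NormedAddCommGroup H] [InnerProductSpace ℂ H]
    [FiniteDimensional ℂ H] (n N : ℕ) (hn : Module.finrank ℂ H = n)
    (f : Fin N → H)
    (hframe : Submodule.span ℂ (Set.range f) = ⊤)
    (Sinv : H →ₗ[ℂ] H)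
    (hSinv₁ : ∀ x : H, ∑ i, ⟪f i, Sinv x⟫ • f i = x)
    (hSinv₂ : ∀ x : H, Sinv (∑ i, ⟪f i, x⟫ • f i) = x)
    (p : ℝ) (hp : 2 < p)
    (L : ℝ)
    (hLmax : IsGreatest (Set.range fun i => ‖f i‖ * ‖Sinv (f i)‖) L)
    (hinter : Submodule.span ℂ (f '' {i | ‖f i‖ * ‖Sinv (f i)‖ = L}) ⊓
        Submodule.span ℂ (f '' {i | ‖f i‖ * ‖Sinv (f i)‖ ≠ L}) = ⊥)
    (hc : ∃ c : ℝ, 0 < c ∧ ∀ i, ‖f i‖ * ‖Sinv (f i)‖ = L → ‖f i‖ = c)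
    (hli : LinearIndependent ℂ
        (fun i : {i : Fin N // ‖f i‖ * ‖Sinv (f i)‖ ≠ L} => f (i : Fin N))) :
    (∀ g : Fin N → H, (∀ x : H, x = ∑ i, ⟪f i, x⟫ • g i) →
        ((1 / (N : ℝ)) * ∑ i, (‖f i‖ * ‖g i‖) ^ p) ^ (1 / p) ≤
          ((1 / (N : ℝ)) * ∑ i, (‖f i‖ * ‖Sinv (f i)‖) ^ p) ^ (1 / p) →
        ∀ i, g i = Sinv (f i)) ∧
    (∀ g : Fin N → H, (∀ x : H, x = ∑ i, ⟪f i, x⟫ • g i) →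
        ((1 / (N : ℝ)) * ∑ i, (‖f i‖ * ‖Sinv (f i)‖) ^ p) ^ (1 / p) ≤
          ((1 / (N : ℝ)) * ∑ i, (‖f i‖ * ‖g i‖) ^ p) ^ (1 / p)) :=
  stmt_6_general N f Sinv hSinv₁ hSinv₂ p hp L hinter hc hli
end

section
/- Let F = (f_1,…,f_N), N ≥ 2, be a uniform tight frame with bound A > 0 for an n-dimensional complex inner product space H (so ∑_i |⟨x,f_i⟩|² = A‖x‖² for all x and all ‖f_i‖ are equal, hence ‖f_i‖² = An/N), and assume |⟨f_i,f_j⟩| is the same for all pairs i ≠ j. Then for every 1 ≤ m ≤ N and every p > 0, the m-erasure Frobenius average error of F with its canonical dual (f_i/A) equals AE_F^{(m),p}(F, S_F^{-1}F) = sqrt( m·(n/N)² + m(m−1)(nN − n²)/(N²(N−1)) ). -/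
/-!
Taking the trace of the frame operator `A • id` gives `∑ ‖f i‖² = A n`, so uniformity forces
`‖f i‖² = A n / N`. Tightness applied to a single frame vector `f i` reads
`‖f i‖⁴ + (N - 1) c² = A ‖f i‖²`, which determines the common value `c` of the off-diagonal
`|⟨f i, f j⟩|`. For the canonical dual the error of an erasure set `Λ` of size `m` is
`A⁻² ∑_{j,k ∈ Λ} |⟨f k, f j⟩|² = A⁻² m (‖f i‖⁴ + (m - 1) c²)`, which does not depend on `Λ`;
hence every power mean of these errors is their common value.
-/

open scoped InnerProductSpace ComplexInnerProductSpace
open Finset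

theorem Finset.powerMean_sqrt_of_forall_eq {α : Type*} {t : Finset α} (ht : t.Nonempty)
    {p a : ℝ} (hp : p ≠ 0) {e : α → ℝ} (he0 : ∀ x ∈ t, 0 ≤ e x) (he : ∀ x ∈ t, e x = a) :
    ((1 / (#t : ℝ)) * ∑ x ∈ t, e x ^ (p / 2)) ^ (1 / p) = √a := by
  obtain ⟨x, hx⟩ := ht
  have ha : 0 ≤ a := he x hx ▸ he0 x hx
  have hcard : (#t : ℝ) ≠ 0 := by exact_mod_cast (card_pos.2 ⟨x, hx⟩).ne'
  rw [sum_congr rfl fun y hy => by rw [he y hy], sum_const, nsmul_eq_mul, one_div,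
    inv_mul_cancel_left₀ hcard, ← Real.rpow_mul ha, show p / 2 * (1 / p) = 1 / 2 by field_simp,
    Real.sqrt_eq_rpow]

section Frame

variable {𝕜 E ι : Type*} [RCLike 𝕜] [NormedAddCommGroup E] [InnerProductSpace 𝕜 E]

theorem sum_norm_sq_eq_mul_finrank_of_tight [FiniteDimensional 𝕜 E] [Fintype ι] {f : ι → E}
    {A : ℝ} (htight : ∀ x : E, ∑ i, ‖⟪f i, x⟫_𝕜‖ ^ 2 = A * ‖x‖ ^ 2) :
    ∑ i, ‖f i‖ ^ 2 = A * Module.finrank 𝕜 E := by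
  let b := stdOrthonormalBasis 𝕜 E
  calc ∑ i, ‖f i‖ ^ 2 = ∑ i, ∑ t, ‖⟪f i, b t⟫_𝕜‖ ^ 2 := by simp only [b.sum_sq_norm_inner_left]
    _ = ∑ t, A * ‖b t‖ ^ 2 := by rw [sum_comm]; simp only [htight]
    _ = A * Module.finrank 𝕜 E := by simp [b.orthonormal.1, mul_comm]

theorem norm_sq_eq_of_tight_of_uniform [FiniteDimensional 𝕜 E] [Fintype ι] {f : ι → E}
    {A : ℝ} (htight : ∀ x : E, ∑ i, ‖⟪f i, x⟫_𝕜‖ ^ 2 = A * ‖x‖ ^ 2)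
    (huniform : ∀ i j, ‖f i‖ = ‖f j‖) (i : ι) :
    ‖f i‖ ^ 2 = A * Module.finrank 𝕜 E / Fintype.card ι := by
  have hcard : (Fintype.card ι : ℝ) ≠ 0 := by exact_mod_cast (Fintype.card_pos_iff.2 ⟨i⟩).ne'
  rw [← sum_norm_sq_eq_mul_finrank_of_tight htight, sum_congr rfl fun j _ => by rw [huniform j i],
    sum_const, card_univ, nsmul_eq_mul, mul_div_cancel_left₀ _ hcard]

theorem inner_ofReal_smul_mul_inner (r : ℝ) (x y : E) :
    ⟪(r : 𝕜) • x, (r : 𝕜) • y⟫_𝕜 * ⟪y, x⟫_𝕜 = ((r ^ 2 * ‖⟪x, y⟫_𝕜‖ ^ 2 : ℝ) : 𝕜) := by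
  rw [inner_smul_left, inner_smul_right, ← inner_conj_symm y x, mul_assoc, mul_assoc,
    RCLike.mul_conj, RCLike.conj_ofReal]
  push_cast
  ring

theorem sum_sum_inner_ofReal_smul_mul_inner (r : ℝ) (f : ι → E) (s : Finset ι) :
    ∑ j ∈ s, ∑ k ∈ s, ⟪(r : 𝕜) • f k, (r : 𝕜) • f j⟫_𝕜 * ⟪f j, f k⟫_𝕜 =
      ((r ^ 2 * ∑ j ∈ s, ∑ k ∈ s, ‖⟪f k, f j⟫_𝕜‖ ^ 2 : ℝ) : 𝕜) := by
  simp only [inner_ofReal_smul_mul_inner, mul_sum, RCLike.ofReal_sum]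

variable [DecidableEq ι] {f : ι → E} {c : ℝ}

theorem sum_norm_inner_sq_of_equiangular (hc : ∀ i j, i ≠ j → ‖⟪f i, f j⟫_𝕜‖ = c)
    {s : Finset ι} {i : ι} (hi : i ∈ s) :
    ∑ k ∈ s, ‖⟪f k, f i⟫_𝕜‖ ^ 2 = (‖f i‖ ^ 2) ^ 2 + (#s - 1 : ℝ) * c ^ 2 := by
  rw [← add_sum_erase _ _ hi, inner_self_eq_norm_sq_to_K, norm_pow, RCLike.norm_ofReal, abs_norm,
    sum_congr rfl fun k hk => by rw [hc k i (ne_of_mem_erase hk)], sum_const, nsmul_eq_mul,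
    card_erase_of_mem hi, Nat.cast_pred (card_pos.2 ⟨i, hi⟩)]

theorem sum_sum_norm_inner_sq_of_equiangular {a : ℝ} (hnorm : ∀ i, ‖f i‖ ^ 2 = a)
    (hc : ∀ i j, i ≠ j → ‖⟪f i, f j⟫_𝕜‖ = c) (s : Finset ι) :
    ∑ j ∈ s, ∑ k ∈ s, ‖⟪f k, f j⟫_𝕜‖ ^ 2 = #s * (a ^ 2 + (#s - 1 : ℝ) * c ^ 2) := by
  rw [sum_congr rfl fun j hj => by rw [sum_norm_inner_sq_of_equiangular hc hj, hnorm j],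
    sum_const, nsmul_eq_mul]

end Frame

theorem stmt_7_general {H : Type*} [NormedAddCommGroup H] [InnerProductSpace ℂ H]
    [FiniteDimensional ℂ H] (n N : ℕ) (hn : Module.finrank ℂ H = n)
    (hN : 2 ≤ N) (f : Fin N → H) (A : ℝ) (hA : 0 < A)
    (htight : ∀ x : H, ∑ i, ‖⟪f i, x⟫‖ ^ 2 = A * ‖x‖ ^ 2)
    (huniform : ∀ i j, ‖f i‖ = ‖f j‖)
    (hequi : ∃ c : ℝ, ∀ i j, i ≠ j → ‖⟪f i, f j⟫‖ = c)
    (m : ℕ) (hmN : m ≤ N) (p : ℝ) (hp : 0 < p) :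
    ((1 / (N.choose m : ℝ)) *
        ∑ Λ ∈ Finset.powersetCard m (Finset.univ : Finset (Fin N)),
          ((∑ j ∈ Λ, ∑ k ∈ Λ,
              ⟪(A : ℂ)⁻¹ • f k, (A : ℂ)⁻¹ • f j⟫ * ⟪f j, f k⟫).re) ^ (p / 2)) ^ (1 / p) =
      Real.sqrt ((m : ℝ) * ((n : ℝ) / N) ^ 2 +
        (m : ℝ) * ((m : ℝ) - 1) * ((n : ℝ) * N - (n : ℝ) ^ 2) /
          ((N : ℝ) ^ 2 * ((N : ℝ) - 1))) := by
  obtain ⟨c, hc⟩ := hequi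
  have hnorm (i : Fin N) : ‖f i‖ ^ 2 = A * n / N := by
    simpa [hn] using norm_sq_eq_of_tight_of_uniform htight huniform i
  have hN1 : (N : ℝ) - 1 ≠ 0 := by
    have : (2 : ℝ) ≤ N := by exact_mod_cast hN
    linarith
  have hc2 : c ^ 2 = (A * (A * n / N) - (A * n / N) ^ 2) / (N - 1) := by
    have h := sum_norm_inner_sq_of_equiangular hc (mem_univ (⟨0, by omega⟩ : Fin N))
    rw [htight, hnorm, card_univ, Fintype.card_fin] at h
    rw [eq_div_iff hN1]
    linarith
  -- The lemmas above are stated with `RCLike.ofReal`, which is `Complex.ofReal` only by `rfl`.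
  rw [show N.choose m = #(powersetCard m (univ : Finset (Fin N))) by simp,
    ← Complex.ofReal_inv, ← RCLike.ofReal_eq_complex_ofReal]
  simp only [sum_sum_inner_ofReal_smul_mul_inner]
  rw [RCLike.ofReal_eq_complex_ofReal]
  simp only [Complex.ofReal_re]
  refine powerMean_sqrt_of_forall_eq (powersetCard_nonempty.2 (by simpa)) hp.ne'
    (fun _ _ => by positivity) fun Λ hΛ => ?_
  rw [sum_sum_norm_inner_sq_of_equiangular hnorm hc, (mem_powersetCard.1 hΛ).2, hc2]
  field_simp

/-- Let `F = (f₁,…,f_N)`, `N ≥ 2`, be a uniform tight frame with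
bound `A > 0` for an `n`-dimensional complex inner product space `H`, with
`|⟨f i, f j⟩|` constant over all pairs `i ≠ j`.  Then for every `1 ≤ m ≤ N` and
`p > 0`, the `m`-erasure Frobenius average error of `F` with its canonical dual
`(f i / A)` equals `√( m (n/N)² + m(m−1)(nN − n²)/(N²(N−1)) )`.  For each erasure
set `Λ`, the squared Frobenius norm of the error operator is the (real) value of
`∑_{j,k ∈ Λ} ⟨g j, g k⟩⟨f k, f j⟩`, i.e. `(∑_{j,k∈Λ} ⟪g k, g j⟫ ⟪f j, f k⟫).re`. -/
theorem stmt_7 {H : Type*} [NormedAddCommGroup H] [InnerProductSpace ℂ H]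
    [FiniteDimensional ℂ H] (n N : ℕ) (hn : Module.finrank ℂ H = n)
    (hN : 2 ≤ N) (f : Fin N → H) (A : ℝ) (hA : 0 < A)
    (htight : ∀ x : H, ∑ i, ‖⟪f i, x⟫‖ ^ 2 = A * ‖x‖ ^ 2)
    (huniform : ∀ i j, ‖f i‖ = ‖f j‖)
    (hequi : ∃ c : ℝ, ∀ i j, i ≠ j → ‖⟪f i, f j⟫‖ = c)
    (m : ℕ) (hm1 : 1 ≤ m) (hmN : m ≤ N) (p : ℝ) (hp : 0 < p) :
    ((1 / (N.choose m : ℝ)) *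
        ∑ Λ ∈ Finset.powersetCard m (Finset.univ : Finset (Fin N)),
          ((∑ j ∈ Λ, ∑ k ∈ Λ,
              ⟪(A : ℂ)⁻¹ • f k, (A : ℂ)⁻¹ • f j⟫ * ⟪f j, f k⟫).re) ^ (p / 2)) ^ (1 / p) =
      Real.sqrt ((m : ℝ) * ((n : ℝ) / N) ^ 2 +
        (m : ℝ) * ((m : ℝ) - 1) * ((n : ℝ) * N - (n : ℝ) ^ 2) /
          ((N : ℝ) ^ 2 * ((N : ℝ) - 1))) :=
  stmt_7_general n N hn hN f A hA htight huniform hequi m hmN p hp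
end

section
/- Let F = (f_1,…,f_N) be a uniform tight frame with bound A > 0 for an n-dimensional complex inner product space H such that |⟨f_i,f_j⟩| is the same for all i ≠ j, and let p > 1. If G = (g_1,…,g_N) is a dual frame of F with ((1/N)∑_{i=1}^N (‖f_i‖·‖g_i‖)^p)^{1/p} = n/N (i.e., G is 1-erasure Frobenius optimal), then ⟨f_i, g_i⟩ = n/N for all 1 ≤ i ≤ N; that is, G is a 1-uniform dual of F. -/
/-!
Writing the identity as `∑ i, ⟪f i, ·⟫ • g i` and taking traces gives `∑ i, ⟪f i, g i⟫ = n`.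
By Cauchy–Schwarz and the triangle inequality the arithmetic mean of the products
`‖f i‖ * ‖g i‖` is therefore at least `n / N`, while optimality says that their `p`-th power
mean equals `n / N`. Strict convexity of `t ↦ t ^ p` forces all products to equal `n / N`, and
`N` complex numbers of modulus at most `n / N` with sum `n` all equal `n / N`.
-/

open scoped ComplexInnerProductSpace

open Finset ComplexOrder

theorem Module.Dual.sum_apply_eq_finrank_of_eq_sum_smul {R M ι : Type*} [CommRing R]
    [AddCommGroup M] [Module R M] [Module.Free R M] [Module.Finite R M] [Fintype ι]
    (φ : ι → Module.Dual R M) (g : ι → M) (hrec : ∀ x, x = ∑ i, φ i x • g i) :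
    ∑ i, φ i (g i) = Module.finrank R M := by
  have hid : LinearMap.id = ∑ i, (φ i).smulRight (g i) := by
    ext x
    simpa using hrec x
  rw [← LinearMap.trace_id, hid, map_sum]
  simp only [LinearMap.trace_smulRight]

theorem sum_inner_eq_finrank_of_dual {𝕜 E ι : Type*} [RCLike 𝕜] [NormedAddCommGroup E]
    [InnerProductSpace 𝕜 E] [FiniteDimensional 𝕜 E] [Fintype ι] (f g : ι → E)
    (hdual : ∀ x, x = ∑ i, inner 𝕜 (f i) x • g i) :
    ∑ i, inner 𝕜 (f i) (g i) = Module.finrank 𝕜 E :=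
  Module.Dual.sum_apply_eq_finrank_of_eq_sum_smul (fun i ↦ innerₛₗ 𝕜 (f i)) g hdual

theorem Real.eq_of_rpow_mean_le_of_le_arith_mean {ι : Type*} [Fintype ι] {a : ι → ℝ} {m p : ℝ}
    (ha : ∀ i, 0 ≤ a i) (hp : 1 < p) (hm : m * Fintype.card ι ≤ ∑ i, a i)
    (hmp : ((1 / Fintype.card ι) * ∑ i, a i ^ p) ^ (1 / p) ≤ m) (i : ι) : a i = m := by
  have hN : (0 : ℝ) < Fintype.card ι := by exact_mod_cast Fintype.card_pos_iff.mpr ⟨i⟩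
  set w : ι → ℝ := fun _ ↦ 1 / Fintype.card ι
  have hw : ∑ j, w j = 1 := by simp [w, hN.ne']
  have hm_le : m ≤ ∑ j, w j * a j := by
    rw [← mul_sum, one_div, ← div_eq_inv_mul, le_div_iff₀ hN]
    exact hm
  rw [show (1 / Fintype.card ι) * ∑ j, a j ^ p = ∑ j, w j * a j ^ p from mul_sum _ _ _] at hmp
  have hmean_eq : ∑ j, w j * a j = m :=
    le_antisymm ((Real.arith_mean_le_rpow_mean univ w a (fun _ _ ↦ by positivity) hw
      (fun j _ ↦ ha j) hp.le).trans hmp) hm_le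
  have hjensen : ∑ j, w j • a j ^ p ≤ (∑ j, w j • a j) ^ p := by
    have hS : 0 ≤ ∑ j, w j * a j ^ p :=
      sum_nonneg fun j _ ↦ mul_nonneg (by positivity) (Real.rpow_nonneg (ha j) p)
    simp only [smul_eq_mul]
    calc ∑ j, w j * a j ^ p = ((∑ j, w j * a j ^ p) ^ (1 / p)) ^ p := by
          rw [← Real.rpow_mul hS, one_div_mul_cancel (by positivity), Real.rpow_one]
      _ ≤ (∑ j, w j * a j) ^ p :=
          Real.rpow_le_rpow (by positivity) (hmp.trans hm_le) (by positivity)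
  have hconst : ∀ j, a j = a i := fun j ↦
    (strictConvexOn_rpow hp).eq_of_le_map_sum (fun _ _ ↦ by positivity) hw
      (fun j _ ↦ Set.mem_Ici.mpr (ha j)) hjensen (mem_univ j) (mem_univ i)
  rw [← hmean_eq, sum_congr rfl fun j _ ↦ by rw [hconst j], ← sum_mul, hw, one_mul]

theorem Complex.eq_of_sum_eq_of_norm_le {ι : Type*} [Fintype ι] {z : ι → ℂ} {r : ℝ}
    (hz : ∀ i, ‖z i‖ ≤ r) (hsum : ∑ i, z i = Fintype.card ι * r) (i : ι) : z i = r := by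
  have hre_le : ∀ j ∈ univ, (z j).re ≤ r := fun j _ ↦ (re_le_norm _).trans (hz j)
  have hre : (z i).re = r := by
    refine (sum_eq_sum_iff_of_le hre_le).mp ?_ i (mem_univ i)
    simpa [re_sum] using congrArg re hsum
  have hnonneg : 0 ≤ z i := re_eq_norm.mp (le_antisymm (re_le_norm _) (hre ▸ hz i))
  exact ext (by simpa using hre) (by simpa using (nonneg_iff.mp hnonneg).2.symm)

theorem stmt_10_general {H : Type*} [NormedAddCommGroup H] [InnerProductSpace ℂ H]
    [FiniteDimensional ℂ H] (n N : ℕ) (hn : Module.finrank ℂ H = n)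
    (f : Fin N → H)
    (p : ℝ) (hp : 1 < p)
    (g : Fin N → H)
    (hdual : ∀ x : H, x = ∑ i, ⟪f i, x⟫ • g i)
    (hopt : ((1 / (N : ℝ)) * ∑ i, (‖f i‖ * ‖g i‖) ^ p) ^ (1 / p) = (n : ℝ) / N) :
    ∀ i, ⟪g i, f i⟫ = (n : ℂ) / N := by
  intro i
  have hN : (N : ℝ) ≠ 0 := by exact_mod_cast i.pos.ne'
  have htrace : ∑ j, ⟪g j, f j⟫ = n := by
    rw [← hn, ← Complex.conj_natCast, ← sum_inner_eq_finrank_of_dual f g hdual, map_sum]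
    simp only [inner_conj_symm]
  have hinner_le : ∀ j, ‖⟪g j, f j⟫‖ ≤ ‖f j‖ * ‖g j‖ :=
    fun j ↦ (norm_inner_le_norm _ _).trans_eq (mul_comm _ _)
  have hn_le : (n : ℝ) / N * N ≤ ∑ j, ‖f j‖ * ‖g j‖ := by
    rw [div_mul_cancel₀ _ hN, ← Complex.norm_natCast, ← htrace]
    exact (norm_sum_le _ _).trans (sum_le_sum fun j _ ↦ hinner_le j)
  have hnorm : ∀ j, ‖f j‖ * ‖g j‖ = n / N := by
    refine Real.eq_of_rpow_mean_le_of_le_arith_mean (fun j ↦ by positivity) hp ?_ ?_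
    · simpa using hn_le
    · simpa using hopt.le
  have hsum : ∑ j, ⟪g j, f j⟫ = Fintype.card (Fin N) * ((n / N : ℝ) : ℂ) := by
    rw [htrace, Fintype.card_fin, Complex.ofReal_div, Complex.ofReal_natCast,
      Complex.ofReal_natCast, mul_div_cancel₀ _ (by exact_mod_cast hN)]
  simpa using Complex.eq_of_sum_eq_of_norm_le (fun j ↦ (hinner_le j).trans_eq (hnorm j)) hsum i

/-- Let `F = (f₁,…,f_N)` be a uniform tight frame with bound
`A > 0` for an `n`-dimensional complex inner product space `H` such that
`|⟨f i, f j⟩|` is the same for all `i ≠ j`, and let `p > 1`.  If `G` is a dual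
frame of `F` with `((1/N) ∑ i, (‖f i‖·‖g i‖)^p)^(1/p) = n/N` (i.e. `G` is
`1`-erasure Frobenius optimal), then `⟨f i, g i⟩ = n/N` for all `i`, i.e. `G`
is a `1`-uniform dual of `F`.  (The paper's `⟨f i, g i⟩` is `⟪g i, f i⟫`.) -/
theorem stmt_10 {H : Type*} [NormedAddCommGroup H] [InnerProductSpace ℂ H]
    [FiniteDimensional ℂ H] (n N : ℕ) (hn : Module.finrank ℂ H = n)
    (f : Fin N → H) (A : ℝ) (hA : 0 < A)
    (htight : ∀ x : H, ∑ i, ‖⟪f i, x⟫‖ ^ 2 = A * ‖x‖ ^ 2)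
    (huniform : ∀ i j, ‖f i‖ = ‖f j‖)
    (hequi : ∃ c : ℝ, ∀ i j, i ≠ j → ‖⟪f i, f j⟫‖ = c)
    (p : ℝ) (hp : 1 < p)
    (g : Fin N → H)
    (hdual : ∀ x : H, x = ∑ i, ⟪f i, x⟫ • g i)
    (hopt : ((1 / (N : ℝ)) * ∑ i, (‖f i‖ * ‖g i‖) ^ p) ^ (1 / p) = (n : ℝ) / N) :
    ∀ i, ⟪g i, f i⟫ = (n : ℂ) / N :=
  stmt_10_general n N hn f p hp g hdual hopt
end

section
/- Let F = (f_1,…,f_N) be a uniform Parseval frame for an n-dimensional complex inner product space H (so ∑_{i=1}^N |⟨x,f_i⟩|² = ‖x‖² for all x and ‖f_i‖² = n/N for all i), and let p > 1. Then for every dual frame G = (g_1,…,g_N) of F, the 1-erasure numerical-radius average error satisfies AE_N^{(1),p}(F,G) = ((1/N)∑_{i=1}^N ((|⟨f_i,g_i⟩| + ‖f_i‖·‖g_i‖)/2)^p)^{1/p} ≥ n/N, and equality holds if and only if g_i = f_i for all i. In particular, the canonical dual F is the unique 1-erasure numerically optimal dual of F, and AE_N^{(1),p}(F) = n/N. -/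
open scoped ComplexInnerProductSpace

/-!
Reading the reconstruction formula `x = ∑ i, ⟪f i, x⟫ • g i` as `id = ∑ i, rankOne (g i) (f i)`
and taking traces gives `∑ i, ⟪f i, g i⟫ = n`. Each numerical radius dominates `re ⟪f i, g i⟫`,
so the radii have arithmetic mean at least `n / N`, and the power mean inequality gives the bound.
In the equality case strict convexity of `t ↦ t ^ p` makes every radius equal to `n / N = ‖f i‖ ^ 2`,
and then `re ⟪f i, g i⟫ = ‖f i‖ * ‖g i‖` with `‖g i‖ = ‖f i‖`, hence `‖g i - f i‖ = 0`.
-/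

open Finset RCLike
open scoped InnerProductSpace

theorem rpow_weighted_mean_rpow_eq_iff {ι : Type*} {s : Finset ι} {w a : ι → ℝ} {c p : ℝ}
    (hw : ∀ i ∈ s, 0 < w i) (hw₁ : ∑ i ∈ s, w i = 1) (ha : ∀ i ∈ s, 0 ≤ a i)
    (hp : 1 < p) (hc : 0 ≤ c) (hle : c ≤ ∑ i ∈ s, w i * a i) :
    (∑ i ∈ s, w i * a i ^ p) ^ (1 / p) = c ↔ ∀ i ∈ s, a i = c := by
  have hp₀ : p ≠ 0 := (zero_lt_one.trans hp).ne'
  refine ⟨fun heq => ?_, fun hconst => ?_⟩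
  · have hpow : ∑ i ∈ s, w i * a i ^ p = c ^ p := by
      rw [← heq, one_div, Real.rpow_inv_rpow _ hp₀]
      exact sum_nonneg fun i hi => mul_nonneg (hw i hi).le (Real.rpow_nonneg (ha i hi) p)
    have hjensen : (∑ i ∈ s, w i * a i) ^ p ≤ c ^ p :=
      hpow ▸ Real.rpow_arith_mean_le_arith_mean_rpow s w a (fun i hi => (hw i hi).le) hw₁ ha hp.le
    have hmean : ∑ i ∈ s, w i * a i = c :=
      le_antisymm ((Real.rpow_le_rpow_iff (hc.trans hle) hc (by positivity)).mp hjensen) hle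
    have hconst := ((strictConvexOn_rpow hp).map_sum_eq_iff hw hw₁ ha).mp
      (by simp only [smul_eq_mul]; rw [hmean, hpow])
    intro i hi
    rw [hconst i hi]
    exact hmean
  · rw [sum_congr rfl fun i hi => by rw [hconst i hi], ← sum_mul, hw₁, one_mul, one_div,
      Real.rpow_rpow_inv hc hp₀]

section DualPair

variable {𝕜 E ι : Type*} [RCLike 𝕜] [NormedAddCommGroup E] [InnerProductSpace 𝕜 E]

variable (𝕜) in
/-- The numerical radius of the rank-one operator `x ↦ ⟪f, x⟫ • g`. -/
noncomputable def rankOneNumRadius (f g : E) : ℝ := (‖⟪g, f⟫_𝕜‖ + ‖f‖ * ‖g‖) / 2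

theorem rankOneNumRadius_nonneg (f g : E) : 0 ≤ rankOneNumRadius 𝕜 f g := by
  rw [rankOneNumRadius]
  positivity

theorem rankOneNumRadius_self (f : E) : rankOneNumRadius 𝕜 f f = ‖f‖ ^ 2 := by
  rw [rankOneNumRadius, inner_self_eq_norm_sq_to_K, norm_pow, norm_ofReal, abs_norm]
  ring

theorem re_inner_le_norm_inner_symm (f g : E) : re ⟪f, g⟫_𝕜 ≤ ‖⟪g, f⟫_𝕜‖ :=
  (re_le_norm _).trans (norm_inner_symm f g).le

theorem re_inner_le_rankOneNumRadius (f g : E) : re ⟪f, g⟫_𝕜 ≤ rankOneNumRadius 𝕜 f g := by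
  have := re_inner_le_norm_inner_symm (𝕜 := 𝕜) f g
  have := norm_inner_le_norm (𝕜 := 𝕜) g f
  rw [rankOneNumRadius]
  linarith

theorem eq_of_re_inner_eq_rankOneNumRadius {f g : E} (hf : f ≠ 0)
    (hre : re ⟪f, g⟫_𝕜 = rankOneNumRadius 𝕜 f g) (hsq : rankOneNumRadius 𝕜 f g = ‖f‖ ^ 2) :
    g = f := by
  have := re_inner_le_norm_inner_symm (𝕜 := 𝕜) f g
  have := norm_inner_le_norm (𝕜 := 𝕜) g f
  have hf₀ := norm_pos_iff.mpr hf
  rw [rankOneNumRadius] at hre hsq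
  have hnorm : ‖g‖ = ‖f‖ := by nlinarith
  rw [← sub_eq_zero, ← norm_eq_zero, ← sq_eq_zero_iff, norm_sub_sq (𝕜 := 𝕜), inner_re_symm]
  nlinarith

variable [Fintype ι] [FiniteDimensional 𝕜 E] {f g : ι → E}

theorem sum_inner_eq_finrank_of_eq_sum_inner_smul (h : ∀ x, x = ∑ i, ⟪f i, x⟫_𝕜 • g i) :
    ∑ i, ⟪f i, g i⟫_𝕜 = Module.finrank 𝕜 E := by
  have hid : (LinearMap.id : E →ₗ[𝕜] E) =
      ∑ i, (InnerProductSpace.rankOne 𝕜 (g i) (f i)).toLinearMap := by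
    ext x
    simpa using h x
  rw [← LinearMap.trace_id, hid, map_sum]
  simp [InnerProductSpace.trace_rankOne]

theorem sum_re_inner_eq_finrank_of_eq_sum_inner_smul (h : ∀ x, x = ∑ i, ⟪f i, x⟫_𝕜 • g i) :
    ∑ i, re ⟪f i, g i⟫_𝕜 = Module.finrank 𝕜 E := by
  rw [← map_sum, sum_inner_eq_finrank_of_eq_sum_inner_smul h, natCast_re]

theorem finrank_le_sum_rankOneNumRadius (h : ∀ x, x = ∑ i, ⟪f i, x⟫_𝕜 • g i) :
    (Module.finrank 𝕜 E : ℝ) ≤ ∑ i, rankOneNumRadius 𝕜 (f i) (g i) := by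
  rw [← sum_re_inner_eq_finrank_of_eq_sum_inner_smul h]
  exact sum_le_sum fun i _ => re_inner_le_rankOneNumRadius (f i) (g i)

theorem eq_of_sum_rankOneNumRadius_le_finrank (h : ∀ x, x = ∑ i, ⟪f i, x⟫_𝕜 • g i)
    (hsum : ∑ i, rankOneNumRadius 𝕜 (f i) (g i) ≤ Module.finrank 𝕜 E)
    (hsq : ∀ i, rankOneNumRadius 𝕜 (f i) (g i) = ‖f i‖ ^ 2) (hf : ∀ i, f i ≠ 0) : g = f := by
  rw [← sum_re_inner_eq_finrank_of_eq_sum_inner_smul h] at hsum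
  have hre := (sum_eq_sum_iff_of_le fun i _ => re_inner_le_rankOneNumRadius (f i) (g i)).mp
    (le_antisymm (sum_le_sum fun i _ => re_inner_le_rankOneNumRadius (f i) (g i)) hsum)
  funext i
  exact eq_of_re_inner_eq_rankOneNumRadius (hf i) (hre i (mem_univ i)) (hsq i)

end DualPair

theorem stmt_11_general {H : Type*} [NormedAddCommGroup H] [InnerProductSpace ℂ H]
    [FiniteDimensional ℂ H] (n N : ℕ) (hn : Module.finrank ℂ H = n)
    (f : Fin N → H)
    (huniform : ∀ i, ‖f i‖ ^ 2 = (n : ℝ) / N)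
    (p : ℝ) (hp : 1 < p)
    (g : Fin N → H)
    (hdual : ∀ x : H, x = ∑ i, ⟪f i, x⟫ • g i) :
    (n : ℝ) / N ≤
        ((1 / (N : ℝ)) *
          ∑ i, ((‖⟪g i, f i⟫‖ + ‖f i‖ * ‖g i‖) / 2) ^ p) ^ (1 / p) ∧
      (((1 / (N : ℝ)) *
          ∑ i, ((‖⟪g i, f i⟫‖ + ‖f i‖ * ‖g i‖) / 2) ^ p) ^ (1 / p) = (n : ℝ) / N ↔
        ∀ i, g i = f i) := by
  obtain rfl | hN := N.eq_zero_or_pos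
  · simp [Real.zero_rpow (inv_ne_zero (zero_lt_one.trans hp).ne')]
  have hw₁ : ∑ _i : Fin N, 1 / (N : ℝ) = 1 := by simp [hN.ne']
  have hmean : (n : ℝ) / N ≤ ∑ i, 1 / (N : ℝ) * rankOneNumRadius ℂ (f i) (g i) := by
    rw [← mul_sum, one_div_mul_eq_div, ← hn]
    gcongr
    exact finrank_le_sum_rankOneNumRadius hdual
  have hnonneg : ∀ i ∈ univ, 0 ≤ rankOneNumRadius ℂ (f i) (g i) :=
    fun i _ => rankOneNumRadius_nonneg (f i) (g i)
  rw [mul_sum]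
  refine ⟨hmean.trans (Real.arith_mean_le_rpow_mean univ _ _ (fun _ _ => by positivity) hw₁
    hnonneg hp.le), (rpow_weighted_mean_rpow_eq_iff (fun _ _ => by positivity) hw₁ hnonneg hp
    (by positivity) hmean).trans ⟨fun hconst => ?_, fun hgf i _ => ?_⟩⟩
  · obtain rfl | hn₀ := n.eq_zero_or_pos
    · have := Module.finrank_zero_iff.mp hn
      exact fun _ => Subsingleton.elim _ _
    refine congrFun (eq_of_sum_rankOneNumRadius_le_finrank hdual ?_ ?_ ?_)
    · rw [sum_congr rfl hconst, hn, sum_const, card_univ, Fintype.card_fin, nsmul_eq_mul,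
        mul_div_cancel₀ _ (by positivity)]
    · exact fun i => (hconst i (mem_univ i)).trans (huniform i).symm
    · refine fun i => norm_ne_zero_iff.mp ((pow_ne_zero_iff two_ne_zero).mp ?_)
      rw [huniform i]
      positivity
  · rw [hgf i, rankOneNumRadius_self, huniform i]

/-- Let `F` be a uniform Parseval frame for an `n`-dimensional
complex inner product space `H` (so `∑ i, |⟨x, f i⟩|² = ‖x‖²` and `‖f i‖² = n/N`),
and let `p > 1`.  Then for every dual frame `G` of `F`, the `1`-erasure
numerical-radius average error
`AE_N^{(1),p}(F,G) = ((1/N) ∑ i, ((|⟨f i, g i⟩| + ‖f i‖·‖g i‖)/2)^p)^(1/p)` is at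
least `n/N`, with equality iff `g i = f i` for all `i`.  In particular the
canonical dual `F` is the unique `1`-erasure numerically optimal dual and the
optimal value is `n/N`. -/
theorem stmt_11 {H : Type*} [NormedAddCommGroup H] [InnerProductSpace ℂ H]
    [FiniteDimensional ℂ H] (n N : ℕ) (hn : Module.finrank ℂ H = n)
    (f : Fin N → H)
    (hParseval : ∀ x : H, ∑ i, ‖⟪f i, x⟫‖ ^ 2 = ‖x‖ ^ 2)
    (huniform : ∀ i, ‖f i‖ ^ 2 = (n : ℝ) / N)
    (p : ℝ) (hp : 1 < p)
    (g : Fin N → H)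
    (hdual : ∀ x : H, x = ∑ i, ⟪f i, x⟫ • g i) :
    (n : ℝ) / N ≤
        ((1 / (N : ℝ)) *
          ∑ i, ((‖⟪g i, f i⟫‖ + ‖f i‖ * ‖g i‖) / 2) ^ p) ^ (1 / p) ∧
      (((1 / (N : ℝ)) *
          ∑ i, ((‖⟪g i, f i⟫‖ + ‖f i‖ * ‖g i‖) / 2) ^ p) ^ (1 / p) = (n : ℝ) / N ↔
        ∀ i, g i = f i) :=
  stmt_11_general n N hn f huniform p hp g hdual
end

section
/- Let F = (f_1,…,f_N) be a tight frame with bound A > 0 for an n-dimensional complex inner product space H and let p > 1. If the canonical dual S_F^{-1}F = (f_i/A) is 1-erasure numerically optimal, i.e., AE_N^{(1),p}(F, S_F^{-1}F) ≤ AE_N^{(1),p}(F, G) for every dual frame G of F, then the canonical dual is also 1-erasure Frobenius optimal, i.e., AE_F^{(1),p}(F, S_F^{-1}F) ≤ AE_F^{(1),p}(F, G) for every dual frame G of F. -/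
open scoped ComplexInnerProductSpace

/-- Let `F` be a tight frame with bound `A > 0` for an
`n`-dimensional complex inner product space `H` and let `p > 1`.  If the
canonical dual `(f i / A)` is `1`-erasure numerically optimal (it minimizes the
numerical-radius average error among all dual frames of `F`), then it is also
`1`-erasure Frobenius optimal. -/
theorem stmt_12 {H : Type*} [NormedAddCommGroup H] [InnerProductSpace ℂ H]
    [FiniteDimensional ℂ H] (n N : ℕ) (hn : Module.finrank ℂ H = n)
    (f : Fin N → H) (A : ℝ) (hA : 0 < A)
    (htight : ∀ x : H, ∑ i, ‖⟪f i, x⟫‖ ^ 2 = A * ‖x‖ ^ 2)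
    (p : ℝ) (hp : 1 < p)
    (hnum : ∀ g : Fin N → H, (∀ x : H, x = ∑ i, ⟪f i, x⟫ • g i) →
        ((1 / (N : ℝ)) *
          ∑ i, ((‖⟪(A : ℂ)⁻¹ • f i, f i⟫‖ + ‖f i‖ * ‖(A : ℂ)⁻¹ • f i‖) / 2) ^ p) ^ (1 / p) ≤
        ((1 / (N : ℝ)) *
          ∑ i, ((‖⟪g i, f i⟫‖ + ‖f i‖ * ‖g i‖) / 2) ^ p) ^ (1 / p)) :
    ∀ g : Fin N → H, (∀ x : H, x = ∑ i, ⟪f i, x⟫ • g i) →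
      ((1 / (N : ℝ)) * ∑ i, (‖f i‖ * ‖(A : ℂ)⁻¹ • f i‖) ^ p) ^ (1 / p) ≤
        ((1 / (N : ℝ)) * ∑ i, (‖f i‖ * ‖g i‖) ^ p) ^ (1 / p) := by
  intro g hg
  have hterm : ∀ i, (‖⟪(A : ℂ)⁻¹ • f i, f i⟫‖ + ‖f i‖ * ‖(A : ℂ)⁻¹ • f i‖) / 2
      = ‖f i‖ * ‖(A : ℂ)⁻¹ • f i‖ := by
    intro i
    have h1 : ⟪(A : ℂ)⁻¹ • f i, f i⟫ = (starRingEnd ℂ) (A : ℂ)⁻¹ * ⟪f i, f i⟫ :=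
      inner_smul_left _ _ _
    have h2 : ‖⟪(A : ℂ)⁻¹ • f i, f i⟫‖ = ‖(A : ℂ)⁻¹‖ * ‖f i‖ * ‖f i‖ := by
      rw [h1, norm_mul, RCLike.norm_conj, ← inner_self_re_eq_norm, inner_self_eq_norm_mul_norm]
      ring
    have h3 : ‖(A : ℂ)⁻¹ • f i‖ = ‖(A : ℂ)⁻¹‖ * ‖f i‖ := norm_smul _ _
    rw [h2, h3]; ring
  have key : ((1 / (N : ℝ)) *
      ∑ i, ((‖⟪g i, f i⟫‖ + ‖f i‖ * ‖g i‖) / 2) ^ p) ^ (1 / p) ≤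
      ((1 / (N : ℝ)) * ∑ i, (‖f i‖ * ‖g i‖) ^ p) ^ (1 / p) := by
    apply Real.rpow_le_rpow
    · positivity
    · apply mul_le_mul_of_nonneg_left _ (by positivity)
      apply Finset.sum_le_sum
      intro i _
      apply Real.rpow_le_rpow (by positivity) _ (by linarith)
      have hcs : ‖⟪g i, f i⟫‖ ≤ ‖g i‖ * ‖f i‖ := norm_inner_le_norm _ _
      nlinarith
    · positivity
  calc ((1 / (N : ℝ)) * ∑ i, (‖f i‖ * ‖(A : ℂ)⁻¹ • f i‖) ^ p) ^ (1 / p)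
      = ((1 / (N : ℝ)) *
          ∑ i, ((‖⟪(A : ℂ)⁻¹ • f i, f i⟫‖ + ‖f i‖ * ‖(A : ℂ)⁻¹ • f i‖) / 2) ^ p) ^ (1 / p) := by
        simp_rw [hterm]
    _ ≤ ((1 / (N : ℝ)) * ∑ i, ((‖⟪g i, f i⟫‖ + ‖f i‖ * ‖g i‖) / 2) ^ p) ^ (1 / p) := hnum g hg
    _ ≤ _ := key
end

section
/- Let F = (f_1,…,f_N) be a tight frame with bound A > 0 for an n-dimensional complex inner product space H and let p > 1. If the canonical dual S_F^{-1}F = (f_i/A) is 1-erasure spectrally optimal, i.e., AE_R^{(1),p}(F, S_F^{-1}F) ≤ AE_R^{(1),p}(F, G) for every dual frame G of F, then the canonical dual is also 1-erasure numerically optimal, i.e., AE_N^{(1),p}(F, S_F^{-1}F) ≤ AE_N^{(1),p}(F, G) for every dual frame G of F. -/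
open scoped ComplexInnerProductSpace

/-- Let `F` be a tight frame with bound `A > 0` for an
`n`-dimensional complex inner product space `H` and let `p > 1`.  If the
canonical dual `(f i / A)` is `1`-erasure spectrally optimal, then it is also
`1`-erasure numerically optimal. -/
theorem stmt_16 {H : Type*} [NormedAddCommGroup H] [InnerProductSpace ℂ H]
    [FiniteDimensional ℂ H] (n N : ℕ) (hn : Module.finrank ℂ H = n)
    (f : Fin N → H) (A : ℝ) (hA : 0 < A)
    (htight : ∀ x : H, ∑ i, ‖⟪f i, x⟫‖ ^ 2 = A * ‖x‖ ^ 2)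
    (p : ℝ) (hp : 1 < p)
    (hspec : ∀ g : Fin N → H, (∀ x : H, x = ∑ i, ⟪f i, x⟫ • g i) →
        ((1 / (N : ℝ)) * ∑ i, ‖⟪(A : ℂ)⁻¹ • f i, f i⟫‖ ^ p) ^ (1 / p) ≤
          ((1 / (N : ℝ)) * ∑ i, ‖⟪g i, f i⟫‖ ^ p) ^ (1 / p)) :
    ∀ g : Fin N → H, (∀ x : H, x = ∑ i, ⟪f i, x⟫ • g i) →
      ((1 / (N : ℝ)) *
          ∑ i, ((‖⟪(A : ℂ)⁻¹ • f i, f i⟫‖ + ‖f i‖ * ‖(A : ℂ)⁻¹ • f i‖) / 2) ^ p) ^ (1 / p) ≤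
        ((1 / (N : ℝ)) *
          ∑ i, ((‖⟪g i, f i⟫‖ + ‖f i‖ * ‖g i‖) / 2) ^ p) ^ (1 / p) := by
  intro g hg
  have hterm : ∀ i, (‖⟪(A : ℂ)⁻¹ • f i, f i⟫‖ + ‖f i‖ * ‖(A : ℂ)⁻¹ • f i‖) / 2
      = ‖⟪(A : ℂ)⁻¹ • f i, f i⟫‖ := by
    intro i
    have h1 : ‖⟪(A : ℂ)⁻¹ • f i, f i⟫‖ = ‖(A : ℂ)⁻¹‖ * ‖f i‖ ^ 2 := by
      rw [inner_smul_left, norm_mul, RCLike.norm_conj,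
        @inner_self_eq_norm_sq_to_K ℂ]
      simp
    have h2 : ‖f i‖ * ‖(A : ℂ)⁻¹ • f i‖ = ‖(A : ℂ)⁻¹‖ * ‖f i‖ ^ 2 := by
      rw [norm_smul]; ring
    rw [h1, h2]; ring
  calc ((1 / (N : ℝ)) *
          ∑ i, ((‖⟪(A : ℂ)⁻¹ • f i, f i⟫‖ + ‖f i‖ * ‖(A : ℂ)⁻¹ • f i‖) / 2) ^ p) ^ (1 / p)
      = ((1 / (N : ℝ)) * ∑ i, ‖⟪(A : ℂ)⁻¹ • f i, f i⟫‖ ^ p) ^ (1 / p) := by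
        simp_rw [hterm]
    _ ≤ ((1 / (N : ℝ)) * ∑ i, ‖⟪g i, f i⟫‖ ^ p) ^ (1 / p) := hspec g hg
    _ ≤ ((1 / (N : ℝ)) * ∑ i, ((‖⟪g i, f i⟫‖ + ‖f i‖ * ‖g i‖) / 2) ^ p) ^ (1 / p) := by
        apply Real.rpow_le_rpow (by positivity) _ (by positivity)
        apply mul_le_mul_of_nonneg_left _ (by positivity)
        apply Finset.sum_le_sum
        intro i _
        apply Real.rpow_le_rpow (norm_nonneg _) _ (by linarith)
        have := norm_inner_le_norm (𝕜 := ℂ) (g i) (f i)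
        linarith
end

section
/- Let F = (f_1,…,f_N) be a tight frame with bound A > 0 for an n-dimensional complex inner product space H and let p > 1. If the canonical dual S_F^{-1}F = (f_i/A) is 1-erasure spectrally optimal, i.e., AE_R^{(1),p}(F, S_F^{-1}F) ≤ AE_R^{(1),p}(F, G) for every dual frame G of F, then the canonical dual is also 1-erasure Frobenius optimal, i.e., AE_F^{(1),p}(F, S_F^{-1}F) ≤ AE_F^{(1),p}(F, G) for every dual frame G of F. -/
open scoped ComplexInnerProductSpace

/-- Let `F` be a tight frame with bound `A > 0` for an
`n`-dimensional complex inner product space `H` and let `p > 1`.  If the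
canonical dual `(f i / A)` is `1`-erasure spectrally optimal, then it is also
`1`-erasure Frobenius optimal. -/
theorem stmt_17 {H : Type*} [NormedAddCommGroup H] [InnerProductSpace ℂ H]
    [FiniteDimensional ℂ H] (n N : ℕ) (hn : Module.finrank ℂ H = n)
    (f : Fin N → H) (A : ℝ) (hA : 0 < A)
    (htight : ∀ x : H, ∑ i, ‖⟪f i, x⟫‖ ^ 2 = A * ‖x‖ ^ 2)
    (p : ℝ) (hp : 1 < p)
    (hspec : ∀ g : Fin N → H, (∀ x : H, x = ∑ i, ⟪f i, x⟫ • g i) →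
        ((1 / (N : ℝ)) * ∑ i, ‖⟪(A : ℂ)⁻¹ • f i, f i⟫‖ ^ p) ^ (1 / p) ≤
          ((1 / (N : ℝ)) * ∑ i, ‖⟪g i, f i⟫‖ ^ p) ^ (1 / p)) :
    ∀ g : Fin N → H, (∀ x : H, x = ∑ i, ⟪f i, x⟫ • g i) →
      ((1 / (N : ℝ)) * ∑ i, (‖f i‖ * ‖(A : ℂ)⁻¹ • f i‖) ^ p) ^ (1 / p) ≤
        ((1 / (N : ℝ)) * ∑ i, (‖f i‖ * ‖g i‖) ^ p) ^ (1 / p) := by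
  intro g hg
  have h1 : ∀ i, ‖f i‖ * ‖(A : ℂ)⁻¹ • f i‖ = ‖⟪(A : ℂ)⁻¹ • f i, f i⟫‖ := by
    intro i
    rw [inner_smul_left, norm_mul, norm_smul, @inner_self_eq_norm_sq_to_K ℂ]
    simp [abs_of_pos hA, pow_two]
    ring
  have h2 : ((1 / (N : ℝ)) * ∑ i, ‖⟪g i, f i⟫‖ ^ p) ^ (1 / p) ≤
      ((1 / (N : ℝ)) * ∑ i, (‖f i‖ * ‖g i‖) ^ p) ^ (1 / p) := by
    apply Real.rpow_le_rpow
    · positivity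
    · apply mul_le_mul_of_nonneg_left _ (by positivity)
      apply Finset.sum_le_sum
      intro i _
      apply Real.rpow_le_rpow (norm_nonneg _)
      · calc ‖⟪g i, f i⟫‖ ≤ ‖g i‖ * ‖f i‖ := norm_inner_le_norm _ _
          _ = ‖f i‖ * ‖g i‖ := mul_comm _ _
      · linarith
    · positivity
  calc ((1 / (N : ℝ)) * ∑ i, (‖f i‖ * ‖(A : ℂ)⁻¹ • f i‖) ^ p) ^ (1 / p)
      = ((1 / (N : ℝ)) * ∑ i, ‖⟪(A : ℂ)⁻¹ • f i, f i⟫‖ ^ p) ^ (1 / p) := by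
        simp only [h1]
    _ ≤ ((1 / (N : ℝ)) * ∑ i, ‖⟪g i, f i⟫‖ ^ p) ^ (1 / p) := hspec g hg
    _ ≤ _ := h2
end

section
/- Let F = (f_1,…,f_N) be a uniform Parseval frame for an n-dimensional complex inner product space H (so ∑_{i=1}^N |⟨x,f_i⟩|² = ‖x‖² for all x and ‖f_i‖² = n/N for all i), and let p > 1. Then AE_F^{(1),p}(F,F) = AE_R^{(1),p}(F,F) = AE_N^{(1),p}(F,F) = n/N, and for every dual frame G of F one has AE_F^{(1),p}(F,F) ≤ AE_F^{(1),p}(F,G), AE_R^{(1),p}(F,F) ≤ AE_R^{(1),p}(F,G), and AE_N^{(1),p}(F,F) ≤ AE_N^{(1),p}(F,G); that is, the canonical dual F simultaneously minimizes the Frobenius, spectral, and numerical-radius 1-erasure average errors, each with optimal value n/N. -/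
open scoped ComplexInnerProductSpace

private lemma key_power_mean {N : ℕ} (hN : 0 < N) (n : ℕ) (a : Fin N → ℝ)
    (ha : ∀ i, 0 ≤ a i) (hsum : (n : ℝ) ≤ ∑ i, a i) {p : ℝ} (hp : 1 < p) :
    (n : ℝ) / N ≤ ((1 / (N : ℝ)) * ∑ i, a i ^ p) ^ (1 / p) := by
  have hNpos : (0 : ℝ) < N := by exact_mod_cast hN
  have hp0 : p ≠ 0 := by linarith
  have hc : (0 : ℝ) ≤ (n : ℝ) / N := by positivity
  have h1 := Real.rpow_arith_mean_le_arith_mean_rpow Finset.univ (fun _ => 1 / (N : ℝ)) a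
      (fun i _ => by positivity)
      (by rw [Finset.sum_const, Finset.card_univ, Fintype.card_fin, nsmul_eq_mul]; field_simp)
      (fun i _ => ha i) hp.le
  rw [← Finset.mul_sum, ← Finset.mul_sum] at h1
  have h2 : (n : ℝ) / N ≤ (1 / (N : ℝ)) * ∑ i, a i := by
    rw [one_div, inv_mul_eq_div]; gcongr
  have h3 : ((n : ℝ) / N) ^ p ≤ (1 / (N : ℝ)) * ∑ i, a i ^ p :=
    le_trans (Real.rpow_le_rpow hc h2 (by linarith)) h1
  calc (n : ℝ) / N = (((n : ℝ) / N) ^ p) ^ (1 / p) := by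
        rw [one_div, Real.rpow_rpow_inv hc hp0]
    _ ≤ _ := Real.rpow_le_rpow (by positivity) h3 (by positivity)

/-- Let `F` be a uniform Parseval frame for an `n`-dimensional
complex inner product space `H` (so `∑ i, |⟨x, f i⟩|² = ‖x‖²` and `‖f i‖² = n/N`),
and let `p > 1`.  Then the Frobenius, spectral, and numerical-radius `1`-erasure
average errors of `F` with its canonical dual `F` all equal `n/N`, and `F`
simultaneously minimizes all three error measures among all dual frames of `F`. -/
theorem stmt_18 {H : Type*} [NormedAddCommGroup H] [InnerProductSpace ℂ H]
    [FiniteDimensional ℂ H] (n N : ℕ) (hn : Module.finrank ℂ H = n)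
    (f : Fin N → H)
    (hParseval : ∀ x : H, ∑ i, ‖⟪f i, x⟫‖ ^ 2 = ‖x‖ ^ 2)
    (huniform : ∀ i, ‖f i‖ ^ 2 = (n : ℝ) / N)
    (p : ℝ) (hp : 1 < p) :
    ((1 / (N : ℝ)) * ∑ i, (‖f i‖ * ‖f i‖) ^ p) ^ (1 / p) = (n : ℝ) / N ∧
    ((1 / (N : ℝ)) * ∑ i, ‖⟪f i, f i⟫‖ ^ p) ^ (1 / p) = (n : ℝ) / N ∧
    ((1 / (N : ℝ)) *
        ∑ i, ((‖⟪f i, f i⟫‖ + ‖f i‖ * ‖f i‖) / 2) ^ p) ^ (1 / p) = (n : ℝ) / N ∧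
    (∀ g : Fin N → H, (∀ x : H, x = ∑ i, ⟪f i, x⟫ • g i) →
      ((1 / (N : ℝ)) * ∑ i, (‖f i‖ * ‖f i‖) ^ p) ^ (1 / p) ≤
          ((1 / (N : ℝ)) * ∑ i, (‖f i‖ * ‖g i‖) ^ p) ^ (1 / p) ∧
        ((1 / (N : ℝ)) * ∑ i, ‖⟪f i, f i⟫‖ ^ p) ^ (1 / p) ≤
          ((1 / (N : ℝ)) * ∑ i, ‖⟪g i, f i⟫‖ ^ p) ^ (1 / p) ∧
        ((1 / (N : ℝ)) *
            ∑ i, ((‖⟪f i, f i⟫‖ + ‖f i‖ * ‖f i‖) / 2) ^ p) ^ (1 / p) ≤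
          ((1 / (N : ℝ)) *
            ∑ i, ((‖⟪g i, f i⟫‖ + ‖f i‖ * ‖g i‖) / 2) ^ p) ^ (1 / p)) := by
  have hp0 : p ≠ 0 := by linarith
  rcases Nat.eq_zero_or_pos N with hN0 | hN
  · subst hN0
    simp [Real.zero_rpow (one_div_ne_zero hp0), Real.zero_rpow (inv_ne_zero hp0)]
  have hNpos : (0 : ℝ) < N := by exact_mod_cast hN
  set c := (n : ℝ) / N with hcdef
  have hc : 0 ≤ c := by positivity
  have hff : ∀ i, ‖f i‖ * ‖f i‖ = c := fun i => by
    have := huniform i; rw [pow_two] at this; exact this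
  have hinner : ∀ i, ‖⟪f i, f i⟫‖ = c := fun i => by
    rw [inner_self_eq_norm_sq_to_K]
    rw [← huniform i]
    simp
  have base : ∀ a : Fin N → ℝ, (∀ i, a i = c) →
      ((1 / (N : ℝ)) * ∑ i, a i ^ p) ^ (1 / p) = c := by
    intro a ha
    simp_rw [ha]
    rw [Finset.sum_const, Finset.card_univ, Fintype.card_fin, nsmul_eq_mul,
      one_div, inv_mul_cancel_left₀ (ne_of_gt hNpos), one_div,
      Real.rpow_rpow_inv hc hp0]
  have e1 := base _ hff
  have e2 := base _ hinner
  have e3 := base (fun i => (‖⟪f i, f i⟫‖ + ‖f i‖ * ‖f i‖) / 2)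
      (fun i => show (‖⟪f i, f i⟫‖ + ‖f i‖ * ‖f i‖) / 2 = c by rw [hinner, hff]; ring)
  have htrace : ∀ g : Fin N → H, (∀ x : H, x = ∑ i, ⟪f i, x⟫ • g i) →
      (n : ℝ) ≤ ∑ i, ‖⟪g i, f i⟫‖ := by
    intro g hg
    have b : OrthonormalBasis (Fin n) ℂ H := (stdOrthonormalBasis ℂ H).reindex (finCongr hn)
    have h1 : ∀ k : Fin n, (1 : ℂ) = ∑ i, ⟪f i, b k⟫ * ⟪b k, g i⟫ := by
      intro k
      have h := congrArg (fun y => (⟪b k, y⟫ : ℂ)) (hg (b k))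
      simp only [inner_sum, inner_smul_right] at h
      have hkk : (⟪b k, b k⟫ : ℂ) = 1 := by
        have := orthonormal_iff_ite.mp b.orthonormal k k
        simpa using this
      rw [← hkk]; exact h
    have hsum : ∑ i, ⟪f i, g i⟫ = (n : ℂ) := by
      calc ∑ i, ⟪f i, g i⟫ = ∑ i, ∑ k, ⟪f i, b k⟫ * ⟪b k, g i⟫ :=
            Finset.sum_congr rfl fun i _ => (b.sum_inner_mul_inner (f i) (g i)).symm
        _ = ∑ k : Fin n, ∑ i, ⟪f i, b k⟫ * ⟪b k, g i⟫ := Finset.sum_comm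
        _ = ∑ _k : Fin n, (1 : ℂ) := Finset.sum_congr rfl fun k _ => (h1 k).symm
        _ = (n : ℂ) := by simp
    calc (n : ℝ) = ‖(n : ℂ)‖ := by simp
      _ = ‖∑ i, ⟪f i, g i⟫‖ := by rw [hsum]
      _ ≤ ∑ i, ‖⟪f i, g i⟫‖ := norm_sum_le _ _
      _ = ∑ i, ‖⟪g i, f i⟫‖ := Finset.sum_congr rfl fun i _ => norm_inner_symm (f i) (g i)
  refine ⟨e1, e2, e3, fun g hg => ?_⟩
  have ht := htrace g hg
  have hCS : ∀ i, ‖⟪g i, f i⟫‖ ≤ ‖f i‖ * ‖g i‖ := fun i => by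
    rw [mul_comm]; exact norm_inner_le_norm _ _
  refine ⟨?_, ?_, ?_⟩
  · rw [e1]
    exact key_power_mean hN n _ (fun i => by positivity)
      (le_trans ht (Finset.sum_le_sum fun i _ => hCS i)) hp
  · rw [e2]
    exact key_power_mean hN n _ (fun i => norm_nonneg _) ht hp
  · rw [e3]
    exact key_power_mean hN n _ (fun i => by positivity)
      (le_trans ht (Finset.sum_le_sum fun i _ => by have := hCS i; linarith)) hp
end
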